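/- arXiv:2204.13504 — 5 statements merged into one kernel-verified Lean document; each statement's English description precedes it below -/
import Mathlib

section
/- Let p be a prime number, let γ ∈ ℤ_(p), and set s := p·𝔇_p(γ) − γ, an integer in {0,…,p−1}. If v_p(𝔇_p(γ)) = 0, then for every r ∈ {0,1,…,p−1}: v_p((γ)_r) = 0 if r ≤ s, and v_p((γ)_r) = 1 if r > s. -/
open Finset

noncomputable section

/-- The Pochhammer symbol `(x)_i = x (x+1) ⋯ (x+i-1)`. -/
def poch (x : ℚ) (i : ℕ) : ℚ := (ascPochhammer ℚ i).eval x

/-- `x` belongs to the local ring `ℤ_(p)` (written in lowest form, `p` does not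
divide the denominator). -/
def inZp (p : ℕ) (x : ℚ) : Prop := ¬ (p ∣ x.den)

/-- `x` belongs to the maximal ideal `pℤ_(p)`. -/
def inPZp (p : ℕ) (x : ℚ) : Prop := ¬ (p ∣ x.den) ∧ (p : ℤ) ∣ x.num

/-- `x` is a unit of `ℤ_(p)`, i.e. `v_p(x) = 0`. -/
def unitZp (p : ℕ) (x : ℚ) : Prop := ¬ (p ∣ x.den) ∧ ¬ ((p : ℤ) ∣ x.num)

/-- `x` is not a nonpositive integer. -/
def notNonposInt (x : ℚ) : Prop := ¬ ∃ m : ℤ, m ≤ 0 ∧ x = (m : ℚ)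

/-- The hypergeometric coefficient `Q_{α,β}(i)`. -/
def Qcoef {n : ℕ} (α β : Fin n → ℚ) (i : ℕ) : ℚ :=
  (∏ s, poch (α s) i) / (∏ s, poch (β s) i)

/-- The generalized hypergeometric series `ₙF_{n-1}(α,β;z)`. -/
def hgF {n : ℕ} (α β : Fin n → ℚ) : PowerSeries ℚ :=
  PowerSeries.mk fun i => Qcoef α β i

/-- `d_{α,β}`: the lcm of the denominators of the parameters. -/
def dab {n : ℕ} (α β : Fin n → ℚ) : ℕ :=
  Nat.lcm (Finset.univ.lcm fun i => (α i).den) (Finset.univ.lcm fun i => (β i).den)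

/-- Dwork's map `𝔇_p`: the unique rational with `p · 𝔇_p x - x ∈ {0, …, p-1}`
(for `x ∈ ℤ_(p)` and `p` prime). -/
def Dp (p : ℕ) (x : ℚ) : ℚ :=
  (x + ((ZMod.val (-(x.num : ZMod p) * ((x.den : ℕ) : ZMod p)⁻¹) : ℕ) : ℚ)) / p

/-- Componentwise iterate of Dwork's map. -/
def DIter (p a : ℕ) {n : ℕ} (γ : Fin n → ℚ) : Fin n → ℚ := fun i => (Dp p)^[a] (γ i)

open scoped Classical in
/-- The set `E_{γ,δ,p}` of residues of the exponents at zero (it only depends on `δ`,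
whose last entry is `1`). -/
def Eset (p : ℕ) {n : ℕ} (δ : Fin n → ℚ) : Finset ℕ :=
  (Finset.range p).filter fun r => ∃ j, inPZp p ((r : ℚ) - (1 - δ j))

open scoped Classical in
/-- The set `S_{γ,δ,p}`. -/
def Sset (p : ℕ) {n : ℕ} (γ δ : Fin n → ℚ) : Finset ℕ :=
  (Eset p δ).filter fun r => unitZp p (Qcoef γ δ r)

open scoped Classical in
/-- The set `P_{γ,r}`. -/
def Pset (p : ℕ) {n : ℕ} (γ : Fin n → ℚ) (r : ℕ) : Finset (Fin n) :=
  Finset.univ.filter fun s => inPZp p (poch (γ s) r)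

open scoped Classical in
/-- The set `C_{γ,r}`. -/
def Cset (p : ℕ) {n : ℕ} (γ : Fin n → ℚ) (r : ℕ) : Finset (Fin n) :=
  Finset.univ.filter fun s => ¬ inPZp p (poch (γ s) r)

/-- The `P_{p,l}` property of the couple `(α,β)`. -/
def Pprop (p l : ℕ) {n : ℕ} (α β : Fin n → ℚ) : Prop :=
  (∀ i, inZp p (α i)) ∧ (∀ i, inZp p (β i)) ∧
  ∀ k, 1 ≤ k → k ≤ l →
    ((∀ i, unitZp p ((Dp p)^[k] (α i))) ∧ (∀ i, unitZp p ((Dp p)^[k] (β i)))) ∧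
    (∀ i j, unitZp p ((Dp p)^[k] (α i) - (Dp p)^[k] (β j))) ∧
    (∀ j s, unitZp p ((Dp p)^[k] (β j) - (Dp p)^[k] (β s)) ↔ β j ≠ β s) ∧
    (∀ j, β j ≠ 1 → (p : ℚ) * (Dp p)^[k] (β j) - (Dp p)^[k-1] (β j) ≠ (p : ℚ) - 1) ∧
    (∀ i j, unitZp p (1 - (Dp p)^[k] (β j) + (Dp p)^[k] (α i)) ∧
            unitZp p (1 - (Dp p)^[k] (β j) + (Dp p)^[k] (β i)))

/-- The smallest element of `E_{·,δ,p} ∪ {p}` that is greater than `r`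
(so if `r = e_{j-1}` in the increasing enumeration of `E`, this is `e_j`). -/
def nextE (p : ℕ) {n : ℕ} (δ : Fin n → ℚ) (r : ℕ) : ℕ :=
  sInf {e : ℕ | (e ∈ Eset p δ ∨ e = p) ∧ r < e}

/-- A power series over `ℚ`, viewed as a formal Laurent series. -/
def toLS (f : PowerSeries ℚ) : LaurentSeries ℚ := HahnSeries.ofPowerSeries ℤ ℚ f

/-- A polynomial over `ℚ`, viewed as a formal Laurent series. -/
def polyToLS (q : Polynomial ℚ) : LaurentSeries ℚ := toLS (q : PowerSeries ℚ)

/-- `Q ∈ ℤ_(p)(z)`: the Laurent series `Q` is a ratio of polynomials with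
coefficients in `ℤ_(p)`. -/
def ratOverZp (p : ℕ) (Q : LaurentSeries ℚ) : Prop :=
  ∃ A B : Polynomial ℚ, B ≠ 0 ∧ (∀ k, inZp p (A.coeff k)) ∧ (∀ k, inZp p (B.coeff k)) ∧
    Q * polyToLS B = polyToLS A

/-- `Q ∈ ℤ_(p)[[z]][z⁻¹]`: all coefficients of the Laurent series `Q` lie in `ℤ_(p)`. -/
def laurentZp (p : ℕ) (Q : LaurentSeries ℚ) : Prop := ∀ k : ℤ, inZp p (Q.coeff k)

/-- The reduction of `Q` modulo `p` is a rational function over `𝔽_p` of height `< H`: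
equivalently, `Q ≡ A/B mod p` with `B ≢ 0 mod p` and both degrees `< H`. -/
def heightModLt (p : ℕ) (Q : LaurentSeries ℚ) (H : ℕ) : Prop :=
  ∃ A B : Polynomial ℚ, (∀ k, inZp p (A.coeff k)) ∧ (∀ k, inZp p (B.coeff k)) ∧
    (∃ k, ¬ inPZp p (B.coeff k)) ∧ A.natDegree < H ∧ B.natDegree < H ∧
    ∀ k : ℤ, inPZp p ((Q * polyToLS B - polyToLS A).coeff k)

/-!
Write `s = p 𝔇_p(γ) - γ`. Since `𝔇_p(γ)` is a `p`-adic unit, `p 𝔇_p(γ)` has valuation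
exactly `1`, and for `0 ≤ i < p` the factor `γ + i = (i - s) + p 𝔇_p(γ)` of `(γ)_r` is a unit
when `i ≠ s` (as `p ∤ i - s`) and has valuation `1` when `i = s`. Hence `v_p((γ)_r) = 1` exactly
when the factor `γ + s` occurs, i.e. when `s < r`.
-/

/-- The integer `s = p 𝔇_p(x) - x ∈ {0, …, p-1}`. -/
def dworkDigit (p : ℕ) (x : ℚ) : ℕ :=
  ZMod.val (-(x.num : ZMod p) * ((x.den : ℕ) : ZMod p)⁻¹)

lemma dworkDigit_lt (p : ℕ) [NeZero p] (x : ℚ) : dworkDigit p x < p :=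
  ZMod.val_lt _

lemma natCast_mul_Dp {p : ℕ} (hp : p ≠ 0) (x : ℚ) : (p : ℚ) * Dp p x = x + dworkDigit p x := by
  rw [Dp, dworkDigit, mul_div_cancel₀ _ (Nat.cast_ne_zero.mpr hp)]

lemma poch_succ (x : ℚ) (n : ℕ) : poch x (n + 1) = poch x n * (x + n) :=
  ascPochhammer_succ_eval n x

lemma Int.not_natCast_dvd_natCast_sub {p i j : ℕ} (hi : i < p) (hj : j < p) (hij : i ≠ j) :
    ¬ (p : ℤ) ∣ (i : ℤ) - j := fun h =>
  hij (Nat.ModEq.eq_of_lt_of_lt (Int.natCast_modEq_iff.mp (Int.modEq_iff_dvd.mpr h)).symm hi hj)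

namespace padicValRat

variable {p : ℕ} [Fact p.Prime]

lemma add_ne_zero_and_eq_of_lt {q r : ℚ} (hq : q ≠ 0)
    (hval : padicValRat p q < padicValRat p r) :
    q + r ≠ 0 ∧ padicValRat p (q + r) = padicValRat p q := by
  rcases eq_or_ne r 0 with rfl | hr
  · simpa using hq
  have hqr : q + r ≠ 0 := by
    intro h
    rw [eq_neg_of_add_eq_zero_right h, padicValRat.neg] at hval
    exact hval.false
  exact ⟨hqr, add_eq_of_lt hqr hq hr hval⟩

end padicValRat

section unitZp

variable {p : ℕ} {x : ℚ}

lemma unitZp.ne_zero (h : unitZp p x) : x ≠ 0 := by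
  rintro rfl
  exact h.2 (dvd_zero _)

lemma unitZp.padicValRat_eq_zero (h : unitZp p x) : padicValRat p x = 0 := by
  simp [padicValRat, padicValInt.eq_zero_of_not_dvd h.2, padicValNat.eq_zero_of_not_dvd h.1]

end unitZp

section DworkUnit

variable {p : ℕ} [hp : Fact p.Prime] {γ : ℚ}

lemma padicValRat_natCast_mul_Dp (hD : unitZp p (Dp p γ)) :
    padicValRat p ((p : ℚ) * Dp p γ) = 1 := by
  rw [padicValRat.mul (Nat.cast_ne_zero.mpr hp.out.ne_zero) hD.ne_zero, hD.padicValRat_eq_zero,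
    padicValRat.self hp.out.one_lt, add_zero]

lemma padicValRat_add_natCast (hD : unitZp p (Dp p γ)) {i : ℕ} (hi : i < p) :
    γ + i ≠ 0 ∧ padicValRat p (γ + i) = if i = dworkDigit p γ then 1 else 0 := by
  have hpD := natCast_mul_Dp hp.out.ne_zero γ
  have hvD := padicValRat_natCast_mul_Dp hD
  split_ifs with his
  · rw [his, ← hpD]
    exact ⟨mul_ne_zero (Nat.cast_ne_zero.mpr hp.out.ne_zero) hD.ne_zero, hvD⟩
  have hsplit : γ + i = (((i : ℤ) - dworkDigit p γ : ℤ) : ℚ) + (p : ℚ) * Dp p γ := by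
    rw [hpD]; push_cast; ring
  have hunit : padicValRat p (((i : ℤ) - dworkDigit p γ : ℤ) : ℚ) = 0 := by
    rw [padicValRat.of_int, padicValInt.eq_zero_of_not_dvd
      (Int.not_natCast_dvd_natCast_sub hi (dworkDigit_lt p γ) his), Nat.cast_zero]
  have hne : (((i : ℤ) - dworkDigit p γ : ℤ) : ℚ) ≠ 0 := by
    rw [Int.cast_ne_zero, sub_ne_zero]
    exact_mod_cast his
  rw [hsplit, ← hunit]
  exact padicValRat.add_ne_zero_and_eq_of_lt hne (by rw [hunit, hvD]; exact one_pos)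

lemma padicValRat_poch (hD : unitZp p (Dp p γ)) {r : ℕ} (hr : r ≤ p) :
    poch γ r ≠ 0 ∧ padicValRat p (poch γ r) = if dworkDigit p γ < r then 1 else 0 := by
  induction r with
  | zero => simp [poch]
  | succ n ih =>
    obtain ⟨hne, hval⟩ := ih (Nat.le_of_succ_le hr)
    obtain ⟨hfne, hfval⟩ := padicValRat_add_natCast hD (Nat.lt_of_succ_le hr)
    rw [poch_succ, padicValRat.mul hne hfne, hval, hfval]
    refine ⟨mul_ne_zero hne hfne, ?_⟩
    split_ifs <;> omega

end DworkUnit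

theorem padicVal_pochhammer_general (p : ℕ) (hp : Nat.Prime p) (γ : ℚ)
    (hD : unitZp p (Dp p γ)) :
    ∀ r : ℕ, r < p →
      (((r : ℚ) ≤ (p : ℚ) * Dp p γ - γ → poch γ r ≠ 0 ∧ padicValRat p (poch γ r) = 0) ∧
        ((p : ℚ) * Dp p γ - γ < (r : ℚ) → poch γ r ≠ 0 ∧ padicValRat p (poch γ r) = 1)) := by
  have : Fact p.Prime := ⟨hp⟩
  intro r hr
  obtain ⟨hne, hval⟩ := padicValRat_poch hD hr.le
  rw [natCast_mul_Dp hp.ne_zero, add_sub_cancel_left, Nat.cast_le, Nat.cast_lt]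
  exact ⟨fun hle => ⟨hne, by rwa [if_neg hle.not_gt] at hval⟩,
    fun hlt => ⟨hne, by rwa [if_pos hlt] at hval⟩⟩

/-- With `s := p 𝔇_p(γ) - γ ∈ {0,…,p-1}`, if `v_p(𝔇_p(γ)) = 0` then for
`r ∈ {0,…,p-1}`, `v_p((γ)_r) = 0` if `r ≤ s` and `v_p((γ)_r) = 1` if `r > s`. -/
theorem padicVal_pochhammer (p : ℕ) (hp : Nat.Prime p) (γ : ℚ) (hγ : inZp p γ)
    (hD : unitZp p (Dp p γ)) :
    ∀ r : ℕ, r < p →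
      (((r : ℚ) ≤ (p : ℚ) * Dp p γ - γ → poch γ r ≠ 0 ∧ padicValRat p (poch γ r) = 0) ∧
        ((p : ℚ) * Dp p γ - γ < (r : ℚ) → poch γ r ≠ 0 ∧ padicValRat p (poch γ r) = 1)) :=
  padicVal_pochhammer_general p hp γ hD
end
end

section
/- Let γ = a/b ∈ ℚ∩(0,1] be written in lowest form and let p be a prime number such that γ ∈ ℤ_(p). Then 𝔇_p(γ) = y/b, where y is an integer in {1,…,b} satisfying p·y ≡ a (mod b); in particular 𝔇_p(γ) ∈ ℚ∩(0,1]. -/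
open Finset

noncomputable section

/-- For `γ = a/b ∈ ℚ ∩ (0,1]` in lowest form and `γ ∈ ℤ_(p)`,
`𝔇_p(γ) = y/b` with `y ∈ {1,…,b}` and `p y ≡ a (mod b)`; in particular
`𝔇_p(γ) ∈ ℚ ∩ (0,1]`. -/
theorem Dp_mem_unitInterval (γ : ℚ) (h0 : 0 < γ) (h1 : γ ≤ 1)
    (p : ℕ) (hp : Nat.Prime p) (hγ : inZp p γ) :
    ∃ y : ℕ, 1 ≤ y ∧ y ≤ γ.den ∧ ((p : ℤ) * (y : ℤ)) ≡ γ.num [ZMOD (γ.den : ℤ)] ∧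
      Dp p γ = (y : ℚ) / (γ.den : ℚ) ∧ 0 < Dp p γ ∧ Dp p γ ≤ 1 := by
  haveI : Fact (Nat.Prime p) := ⟨hp⟩
  have hb0 : 0 < γ.den := γ.pos
  have ha0 : 0 < γ.num := Rat.num_pos.mpr h0
  set a := γ.num with ha
  set b := γ.den with hb
  set c := ZMod.val (-(a : ZMod p) * ((b : ℕ) : ZMod p)⁻¹) with hc
  have hbz : ((b : ℕ) : ZMod p) ≠ 0 := by
    rw [Ne, ZMod.natCast_eq_zero_iff]
    exact hγ
  have hdvd : (p : ℤ) ∣ a + (c : ℤ) * b := by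
    rw [← ZMod.intCast_zmod_eq_zero_iff_dvd]
    push_cast
    rw [hc, ZMod.natCast_val, ZMod.cast_id]
    field_simp
    ring
  obtain ⟨y, hy⟩ := hdvd
  have hp0 : (0 : ℤ) < p := by exact_mod_cast hp.pos
  have hclt : (c : ℤ) ≤ (p : ℤ) - 1 := by
    have := ZMod.val_lt (-(a : ZMod p) * ((b : ℕ) : ZMod p)⁻¹)
    omega
  have hab : a ≤ (b : ℤ) := by
    have hγeq : γ = (a : ℚ) / (b : ℚ) := (Rat.num_div_den γ).symm
    rw [hγeq, div_le_one (by exact_mod_cast hb0)] at h1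
    exact_mod_cast h1
  have hy_pos : 0 < y := by nlinarith
  have hy_le : y ≤ (b : ℤ) := by nlinarith
  refine ⟨y.toNat, by omega, by omega, ?_, ?_, ?_, ?_⟩
  · show ((p : ℤ) * (y.toNat : ℤ)) % (b : ℤ) = a % (b : ℤ)
    rw [Int.toNat_of_nonneg hy_pos.le, ← hy, Int.add_mul_emod_self_right]
  all_goals {
    have hDp : Dp p γ = ((y.toNat : ℕ) : ℚ) / ((b : ℕ) : ℚ) := by
      rw [Dp]
      have hbq : ((b : ℕ) : ℚ) ≠ 0 := by exact_mod_cast hb0.ne'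
      have hpq : ((p : ℕ) : ℚ) ≠ 0 := by exact_mod_cast hp.pos.ne'
      have hγeq : γ = (a : ℚ) / (b : ℚ) := (Rat.num_div_den γ).symm
      have hyq : ((y.toNat : ℕ) : ℚ) = (y : ℚ) := by
        exact_mod_cast congrArg Int.cast (Int.toNat_of_nonneg hy_pos.le)
      rw [← ha, ← hb, ← hc, hyq, hγeq]
      have hyQ : (a : ℚ) + (c : ℚ) * (b : ℚ) = (p : ℚ) * (y : ℚ) := by
        exact_mod_cast congrArg Int.cast hy
      field_simp
      linear_combination hyQ
    have hbpos : (0 : ℚ) < ((b : ℕ) : ℚ) := by exact_mod_cast hb0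
    have hyt1 : 1 ≤ y.toNat := by omega
    have hytb : y.toNat ≤ b := by omega
    first
      | exact hDp
      | { rw [hDp]
          apply div_pos _ hbpos
          exact_mod_cast hyt1 }
      | { rw [hDp, div_le_one hbpos]
          exact_mod_cast hytb } }
end
end

section
/- Let p be a prime, let l, s be positive integers, let C_1 > 0, let t − r ≥ 1 be an integer, and let g_0, g_1, …, g_{t−r} be nonzero elements of 𝔽_p[[z]]. Suppose that for every i ∈ {0,…,t−r}, the identity g_i = Σ_{k=1}^{s} P_{i,k} g_0^{p^{kl}} + Σ_{k=1}^{t−r} A_{i,k} g_k^{p^{sl}} holds in 𝔽_p((z)), where all P_{i,1},…,P_{i,s}, A_{i,1},…,A_{i,t−r} belong to 𝔽_p(z) and have heights less than C_1·p^{sl}. If A_{0,t−r} ≠ 0, then for every i ∈ {0,…,t−r−1} there are T_{i,1},…,T_{i,2s}, D_{i,1},…,D_{i,t−r−1} in 𝔽_p(z), all of height less than 5C_1(t−r+1)·p^{2sl}, such that g_i = Σ_{k=1}^{2s} T_{i,k} g_0^{p^{kl}} + Σ_{k=1}^{t−r−1} D_{i,k} g_k^{p^{2sl}} in 𝔽_p((z)).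 -/
open Finset

noncomputable section

namespace SysRedAux
open Polynomial Finset

variable {K : Type*} [Field K]

/-- `x` can be written as a fraction with numerator and denominator of degree `≤ n`. -/
def HB (x : RatFunc K) (n : ℕ) : Prop :=
  ∃ a b : K[X], b ≠ 0 ∧ a.natDegree ≤ n ∧ b.natDegree ≤ n ∧
    x = algebraMap K[X] (RatFunc K) a / algebraMap K[X] (RatFunc K) b

lemma hb_self (x : RatFunc K) : HB x (max x.num.natDegree x.denom.natDegree) :=
  ⟨x.num, x.denom, x.denom_ne_zero, le_max_left _ _, le_max_right _ _,
    (RatFunc.num_div_denom x).symm⟩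

lemma hb_bound {x : RatFunc K} {n : ℕ} (h : HB x n) :
    x.num.natDegree ≤ n ∧ x.denom.natDegree ≤ n := by
  obtain ⟨a, b, hb, ha, hbd, rfl⟩ := h
  constructor
  · rcases eq_or_ne a 0 with rfl | ha0
    · simp
    · exact le_trans (Polynomial.natDegree_le_of_dvd (RatFunc.num_div_dvd a hb) ha0) ha
  · exact le_trans (Polynomial.natDegree_le_of_dvd (RatFunc.denom_div_dvd a b) hb) hbd

lemma hb_mono {x : RatFunc K} {n m : ℕ} (h : HB x n) (hnm : n ≤ m) : HB x m := by
  obtain ⟨a, b, hb, ha, hbd, rfl⟩ := h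
  exact ⟨a, b, hb, ha.trans hnm, hbd.trans hnm, rfl⟩

lemma hb_zero (n : ℕ) : HB (0 : RatFunc K) n :=
  ⟨0, 1, one_ne_zero, by simp, by simp, by simp⟩

lemma hb_mul {x y : RatFunc K} {n m : ℕ} (hx : HB x n) (hy : HB y m) :
    HB (x * y) (n + m) := by
  obtain ⟨a, b, hb, ha, hbd, rfl⟩ := hx
  obtain ⟨c, d, hd, hc, hdd, rfl⟩ := hy
  refine ⟨a * c, b * d, mul_ne_zero hb hd, ?_, ?_, ?_⟩
  · exact (Polynomial.natDegree_mul_le).trans (add_le_add ha hc)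
  · exact (Polynomial.natDegree_mul_le).trans (add_le_add hbd hdd)
  · rw [map_mul, map_mul]; ring

lemma hb_add {x y : RatFunc K} {n m : ℕ} (hx : HB x n) (hy : HB y m) :
    HB (x + y) (n + m) := by
  obtain ⟨a, b, hb, ha, hbd, rfl⟩ := hx
  obtain ⟨c, d, hd, hc, hdd, rfl⟩ := hy
  refine ⟨a * d + c * b, b * d, mul_ne_zero hb hd, ?_, ?_, ?_⟩
  · refine (Polynomial.natDegree_add_le _ _).trans (max_le
      ((Polynomial.natDegree_mul_le).trans (add_le_add ha hdd)) ?_)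
    calc (c * b).natDegree ≤ c.natDegree + b.natDegree := Polynomial.natDegree_mul_le
      _ ≤ m + n := add_le_add hc hbd
      _ = n + m := Nat.add_comm m n
  · exact (Polynomial.natDegree_mul_le).trans (add_le_add hbd hdd)
  · rw [map_add, map_mul, map_mul, map_mul]
    rw [div_add_div _ _ ((map_ne_zero_iff _ (IsFractionRing.injective K[X] (RatFunc K))).2 hb)
      ((map_ne_zero_iff _ (IsFractionRing.injective K[X] (RatFunc K))).2 hd)]
    ring_nf

lemma hb_neg {x : RatFunc K} {n : ℕ} (hx : HB x n) : HB (-x) n := by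
  obtain ⟨a, b, hb, ha, hbd, rfl⟩ := hx
  exact ⟨-a, b, hb, (Polynomial.natDegree_neg a).le.trans ha, hbd, by rw [map_neg, neg_div]⟩

lemma hb_sub {x y : RatFunc K} {n m : ℕ} (hx : HB x n) (hy : HB y m) :
    HB (x - y) (n + m) := by
  rw [sub_eq_add_neg]; exact hb_add hx (hb_neg hy)

lemma hb_inv {x : RatFunc K} {n : ℕ} (hx : HB x n) : HB x⁻¹ n := by
  obtain ⟨a, b, hb, ha, hbd, rfl⟩ := hx
  rcases eq_or_ne a 0 with rfl | ha0
  · simpa using hb_zero n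
  · exact ⟨b, a, ha0, hbd, ha, by rw [inv_div]⟩

lemma hb_pow {x : RatFunc K} {n : ℕ} (hx : HB x n) (k : ℕ) : HB (x ^ k) (n * k) := by
  obtain ⟨a, b, hb, ha, hbd, rfl⟩ := hx
  refine ⟨a ^ k, b ^ k, pow_ne_zero k hb, ?_, ?_, ?_⟩
  · exact (Polynomial.natDegree_pow_le).trans (by rw [mul_comm k]; exact Nat.mul_le_mul_right k ha)
  · exact (Polynomial.natDegree_pow_le).trans (by rw [mul_comm k]; exact Nat.mul_le_mul_right k hbd)
  · rw [map_pow, map_pow, div_pow]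

lemma hb_sum {ι : Type*} {t : Finset ι} {f : ι → RatFunc K} {n : ℕ}
    (h : ∀ i ∈ t, HB (f i) n) : HB (∑ i ∈ t, f i) (t.card * n) := by
  classical
  induction t using Finset.cons_induction with
  | empty => simpa using hb_zero 0
  | cons a t' hxa ih =>
    rw [Finset.sum_cons, Finset.card_cons, add_mul, one_mul, add_comm (t'.card * n) n]
    exact hb_add (h a (Finset.mem_cons_self a t'))
      (ih fun i hi => h i (Finset.mem_cons_of_mem hi))

end SysRedAux

open SysRedAux Polynomial in
/-- Elimination step for systems of Frobenius-type relations over `𝔽_p(z)`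
(Proposition `lemm_system`; here `m` plays the role of `t - r`). -/
theorem system_reduction (p : ℕ) [Fact (Nat.Prime p)] (l s : ℕ) (hl : 0 < l) (hs : 0 < s)
    (C₁ : ℕ) (hC₁ : 0 < C₁) (m : ℕ) (hm : 1 ≤ m)
    (g : Fin (m + 1) → PowerSeries (ZMod p)) (hg : ∀ i, g i ≠ 0)
    (Pc : Fin (m + 1) → Fin s → RatFunc (ZMod p))
    (Ac : Fin (m + 1) → Fin m → RatFunc (ZMod p))
    (hPh : ∀ i k, max (Pc i k).num.natDegree (Pc i k).denom.natDegree < C₁ * p ^ (s * l))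
    (hAh : ∀ i k, max (Ac i k).num.natDegree (Ac i k).denom.natDegree < C₁ * p ^ (s * l))
    (hsys : ∀ i, (HahnSeries.ofPowerSeries ℤ (ZMod p) (g i) : LaurentSeries (ZMod p)) =
      (∑ k : Fin s, (Pc i k : LaurentSeries (ZMod p)) *
        HahnSeries.ofPowerSeries ℤ (ZMod p) (g 0) ^ p ^ ((k.1 + 1) * l)) +
      ∑ k : Fin m, (Ac i k : LaurentSeries (ZMod p)) *
        HahnSeries.ofPowerSeries ℤ (ZMod p) (g k.succ) ^ p ^ (s * l))
    (hA0 : Ac 0 ⟨m - 1, Nat.sub_lt hm Nat.one_pos⟩ ≠ 0) :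
    ∀ i : Fin m,
      ∃ (T : Fin (2 * s) → RatFunc (ZMod p)) (D : Fin (m - 1) → RatFunc (ZMod p)),
        (∀ k, max (T k).num.natDegree (T k).denom.natDegree <
          5 * C₁ * (m + 1) * p ^ (2 * s * l)) ∧
        (∀ k, max (D k).num.natDegree (D k).denom.natDegree <
          5 * C₁ * (m + 1) * p ^ (2 * s * l)) ∧
        (HahnSeries.ofPowerSeries ℤ (ZMod p) (g i.castSucc) : LaurentSeries (ZMod p)) =
          (∑ k : Fin (2 * s), (T k : LaurentSeries (ZMod p)) *
            HahnSeries.ofPowerSeries ℤ (ZMod p) (g 0) ^ p ^ ((k.1 + 1) * l)) +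
          ∑ k : Fin (m - 1), (D k : LaurentSeries (ZMod p)) *
            HahnSeries.ofPowerSeries ℤ (ZMod p)
              (g ⟨k.1 + 1, Nat.succ_lt_succ (k.2.trans_le (Nat.sub_le m 1))⟩) ^
              p ^ (2 * s * l) := by
  classical
  intro i
  haveI hp : Fact (Nat.Prime p) := ‹_›
  haveI hch : CharP (LaurentSeries (ZMod p)) p :=
    charP_of_injective_ringHom (f := (HahnSeries.C : ZMod p →+* LaurentSeries (ZMod p)))
      HahnSeries.C_injective p
  haveI : ExpChar (LaurentSeries (ZMod p)) p := .prime hp.out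
  set G : ℕ → LaurentSeries (ZMod p) :=
    (fun j => if h : j < m + 1 then HahnSeries.ofPowerSeries ℤ (ZMod p) (g ⟨j, h⟩) else 0) with hG
  set PP : ℕ → ℕ → RatFunc (ZMod p) :=
    (fun j k => if h : j < m + 1 ∧ k < s then Pc ⟨j, h.1⟩ ⟨k, h.2⟩ else 0) with hPP
  set AA : ℕ → ℕ → RatFunc (ZMod p) :=
    (fun j k => if h : j < m + 1 ∧ k < m then Ac ⟨j, h.1⟩ ⟨k, h.2⟩ else 0) with hAA
  have hG0 : G 0 = HahnSeries.ofPowerSeries ℤ (ZMod p) (g 0) := by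
    simp [hG]
  have hsys' : ∀ j (hj : j < m + 1), G j =
      (∑ k ∈ range s, (PP j k : LaurentSeries (ZMod p)) * G 0 ^ p ^ ((k + 1) * l)) +
      ∑ k ∈ range m, (AA j k : LaurentSeries (ZMod p)) * G (k + 1) ^ p ^ (s * l) := by
    intro j hj
    have e1 : G j = HahnSeries.ofPowerSeries ℤ (ZMod p) (g ⟨j, hj⟩) := by simp [hG, hj, Nat.lt_succ_iff.mp hj]
    rw [e1, hsys ⟨j, hj⟩, hG0]
    congr 1
    · rw [← Fin.sum_univ_eq_sum_range
        (fun k => (PP j k : LaurentSeries (ZMod p)) *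
          HahnSeries.ofPowerSeries ℤ (ZMod p) (g 0) ^ p ^ ((k + 1) * l)) s]
      refine Finset.sum_congr rfl fun k _ => ?_
      have h1 : PP j k.1 = Pc ⟨j, hj⟩ k := by simp [hPP, hj, k.2, Nat.lt_succ_iff.mp hj]
      rw [h1]
    · rw [← Fin.sum_univ_eq_sum_range
        (fun k => (AA j k : LaurentSeries (ZMod p)) * G (k + 1) ^ p ^ (s * l)) m]
      refine Finset.sum_congr rfl fun k _ => ?_
      have h1 : AA j k.1 = Ac ⟨j, hj⟩ k := by simp [hAA, hj, k.2, Nat.lt_succ_iff.mp hj]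
      have h2 : G (k.1 + 1) = HahnSeries.ofPowerSeries ℤ (ZMod p) (g k.succ) := by
        simp only [hG, dif_pos (Nat.succ_lt_succ k.2)]
        congr 1
      rw [h1, h2]
  -- squared system
  have hsq : ∀ j (hj : j < m + 1), G j ^ p ^ (s * l) =
      (∑ k ∈ range s, ((PP j k ^ p ^ (s * l) : RatFunc (ZMod p)) : LaurentSeries (ZMod p)) *
        G 0 ^ p ^ ((k + 1 + s) * l)) +
      ∑ k ∈ range m, ((AA j k ^ p ^ (s * l) : RatFunc (ZMod p)) : LaurentSeries (ZMod p)) *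
        G (k + 1) ^ p ^ (2 * s * l) := by
    intro j hj
    rw [hsys' j hj, add_pow_char_pow, sum_pow_char_pow, sum_pow_char_pow]
    congr 1
    · refine Finset.sum_congr rfl fun k _ => ?_
      rw [mul_pow, ← map_pow, ← pow_mul, ← pow_add]
      congr 2
      ring
    · refine Finset.sum_congr rfl fun k _ => ?_
      rw [mul_pow, ← map_pow, ← pow_mul, ← pow_add]
      congr 2
      ring
  have hi1 : i.1 < m + 1 := Nat.lt_succ_of_lt i.2
  have hm1 : m - 1 + 1 = m := Nat.succ_pred_eq_of_pos hm
  have hs1 : s - 1 + 1 = s := Nat.succ_pred_eq_of_pos hs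
  -- auxiliary: split a sum over `range m` at its last term
  have split : ∀ f : ℕ → LaurentSeries (ZMod p),
      ∑ j ∈ range m, f j = (∑ j ∈ range (m - 1), f j) + f (m - 1) := by
    intro f
    conv_lhs => rw [← hm1]
    rw [Finset.sum_range_succ]
  set U : ℕ → RatFunc (ZMod p) :=
    (fun k => ∑ r ∈ range m, AA i.1 r * PP (r + 1) k ^ p ^ (s * l)) with hU
  set B : ℕ → RatFunc (ZMod p) :=
    (fun j => ∑ r ∈ range m, AA i.1 r * AA (r + 1) j ^ p ^ (s * l)) with hB
  have hA0' : AA 0 (m - 1) ≠ 0 := by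
    have e : AA 0 (m - 1) = Ac 0 ⟨m - 1, Nat.sub_lt hm Nat.one_pos⟩ := by
      simp [hAA, Nat.sub_lt hm Nat.one_pos]
    rw [e]; exact hA0
  set Cc : RatFunc (ZMod p) := B (m - 1) * ((AA 0 (m - 1))⁻¹) ^ p ^ (s * l) with hCc
  have hCA : Cc * AA 0 (m - 1) ^ p ^ (s * l) = B (m - 1) := by
    rw [hCc, mul_assoc, ← mul_pow, inv_mul_cancel₀ hA0', one_pow, mul_one]
  set Tn : ℕ → RatFunc (ZMod p) :=
    (fun k => if k < s then PP i.1 k + (if k = s - 1 then Cc else 0)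
      else U (k - s) - Cc * PP 0 (k - s) ^ p ^ (s * l)) with hTn
  set Dn : ℕ → RatFunc (ZMod p) := (fun j => B j - Cc * AA 0 j ^ p ^ (s * l)) with hDn
  have csum : ∀ (n : ℕ) (f : ℕ → RatFunc (ZMod p)),
      ((∑ r ∈ range n, f r : RatFunc (ZMod p)) : LaurentSeries (ZMod p)) =
        ∑ r ∈ range n, (f r : LaurentSeries (ZMod p)) := by
    intro n f
    exact map_sum _ _ _
  -- step A: expanded form of the relation for row i
  have stepA : G i.1 =
      (∑ k ∈ range s, (PP i.1 k : LaurentSeries (ZMod p)) * G 0 ^ p ^ ((k + 1) * l)) +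
      ((∑ k ∈ range s, (U k : LaurentSeries (ZMod p)) * G 0 ^ p ^ ((k + 1 + s) * l)) +
       ((∑ j ∈ range (m - 1), (B j : LaurentSeries (ZMod p)) * G (j + 1) ^ p ^ (2 * s * l)) +
        (B (m - 1) : LaurentSeries (ZMod p)) * G m ^ p ^ (2 * s * l))) := by
    rw [hsys' i.1 hi1]
    congr 1
    calc ∑ k ∈ range m, (AA i.1 k : LaurentSeries (ZMod p)) * G (k + 1) ^ p ^ (s * l)
        = ∑ k ∈ range m,
            ((∑ j ∈ range s, (AA i.1 k : LaurentSeries (ZMod p)) *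
              ((PP (k + 1) j ^ p ^ (s * l) : RatFunc (ZMod p)) : LaurentSeries (ZMod p)) *
              G 0 ^ p ^ ((j + 1 + s) * l)) +
             ∑ j ∈ range m, (AA i.1 k : LaurentSeries (ZMod p)) *
              ((AA (k + 1) j ^ p ^ (s * l) : RatFunc (ZMod p)) : LaurentSeries (ZMod p)) *
              G (j + 1) ^ p ^ (2 * s * l)) := by
          refine Finset.sum_congr rfl fun k hk => ?_
          rw [hsq (k + 1) (Nat.succ_lt_succ (mem_range.1 hk)), mul_add, Finset.mul_sum,
            Finset.mul_sum]
          simp only [mul_assoc]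
      _ = (∑ j ∈ range s, (∑ k ∈ range m, (AA i.1 k : LaurentSeries (ZMod p)) *
            ((PP (k + 1) j ^ p ^ (s * l) : RatFunc (ZMod p)) : LaurentSeries (ZMod p))) *
            G 0 ^ p ^ ((j + 1 + s) * l)) +
          ∑ j ∈ range m, (∑ k ∈ range m, (AA i.1 k : LaurentSeries (ZMod p)) *
            ((AA (k + 1) j ^ p ^ (s * l) : RatFunc (ZMod p)) : LaurentSeries (ZMod p))) *
            G (j + 1) ^ p ^ (2 * s * l) := by
          rw [Finset.sum_add_distrib]
          congr 1
          · rw [Finset.sum_comm]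
            exact Finset.sum_congr rfl fun j _ => by rw [Finset.sum_mul]
          · rw [Finset.sum_comm]
            exact Finset.sum_congr rfl fun j _ => by rw [Finset.sum_mul]
      _ = (∑ j ∈ range s, (U j : LaurentSeries (ZMod p)) * G 0 ^ p ^ ((j + 1 + s) * l)) +
          ∑ j ∈ range m, (B j : LaurentSeries (ZMod p)) * G (j + 1) ^ p ^ (2 * s * l) := by
          congr 1 <;> refine Finset.sum_congr rfl fun j _ => ?_ <;>
            simp only [hU, hB, csum, map_mul, map_pow]
      _ = _ := by
          rw [split (fun j => (B j : LaurentSeries (ZMod p)) * G (j + 1) ^ p ^ (2 * s * l)), hm1]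
  -- step B : solve row 0 for G m ^ (p ^ (2 s l))
  have stepB : ((AA 0 (m - 1) ^ p ^ (s * l) : RatFunc (ZMod p)) : LaurentSeries (ZMod p)) *
      G m ^ p ^ (2 * s * l) =
      G 0 ^ p ^ (s * l)
      - (∑ k ∈ range s, ((PP 0 k ^ p ^ (s * l) : RatFunc (ZMod p)) : LaurentSeries (ZMod p)) *
          G 0 ^ p ^ ((k + 1 + s) * l))
      - ∑ j ∈ range (m - 1), ((AA 0 j ^ p ^ (s * l) : RatFunc (ZMod p)) : LaurentSeries (ZMod p)) *
          G (j + 1) ^ p ^ (2 * s * l) := by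
    have h0 := hsq 0 (Nat.succ_pos m)
    rw [split (fun j => ((AA 0 j ^ p ^ (s * l) : RatFunc (ZMod p)) : LaurentSeries (ZMod p)) *
      G (j + 1) ^ p ^ (2 * s * l)), hm1] at h0
    linear_combination -h0
  -- the key identity
  have key : G i.1 =
      (∑ k ∈ range (2 * s), (Tn k : LaurentSeries (ZMod p)) * G 0 ^ p ^ ((k + 1) * l)) +
      ∑ j ∈ range (m - 1), (Dn j : LaurentSeries (ZMod p)) * G (j + 1) ^ p ^ (2 * s * l) := by
    have hBCc : (B (m - 1) : LaurentSeries (ZMod p)) =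
        (Cc : LaurentSeries (ZMod p)) *
          ((AA 0 (m - 1) ^ p ^ (s * l) : RatFunc (ZMod p)) : LaurentSeries (ZMod p)) := by
      rw [← map_mul, hCA]
    have rhsT : (∑ k ∈ range (2 * s), (Tn k : LaurentSeries (ZMod p)) * G 0 ^ p ^ ((k + 1) * l)) =
        ((∑ k ∈ range s, (PP i.1 k : LaurentSeries (ZMod p)) * G 0 ^ p ^ ((k + 1) * l)) +
         (Cc : LaurentSeries (ZMod p)) * G 0 ^ p ^ (s * l)) +
        ((∑ k ∈ range s, (U k : LaurentSeries (ZMod p)) * G 0 ^ p ^ ((k + 1 + s) * l)) -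
          (Cc : LaurentSeries (ZMod p)) *
            ∑ k ∈ range s, ((PP 0 k ^ p ^ (s * l) : RatFunc (ZMod p)) : LaurentSeries (ZMod p)) *
              G 0 ^ p ^ ((k + 1 + s) * l)) := by
      rw [two_mul, Finset.sum_range_add]
      congr 1
      · -- low part
        calc ∑ k ∈ range s, (Tn k : LaurentSeries (ZMod p)) * G 0 ^ p ^ ((k + 1) * l)
            = ∑ k ∈ range s,
                ((PP i.1 k : LaurentSeries (ZMod p)) * G 0 ^ p ^ ((k + 1) * l) +
                 (if k = s - 1 then (Cc : LaurentSeries (ZMod p)) * G 0 ^ p ^ ((k + 1) * l)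
                  else 0)) := by
              refine Finset.sum_congr rfl fun k hk => ?_
              rw [hTn]
              simp only [if_pos (mem_range.1 hk), map_add, apply_ite
                (fun x : RatFunc (ZMod p) => (x : LaurentSeries (ZMod p))), map_zero,
                add_mul, ite_mul, zero_mul]
          _ = _ := by
              rw [Finset.sum_add_distrib, Finset.sum_ite_eq' (range s) (s - 1)
                (fun k => (Cc : LaurentSeries (ZMod p)) * G 0 ^ p ^ ((k + 1) * l)),
                if_pos (mem_range.2 (Nat.sub_lt hs Nat.one_pos)), hs1]
      · -- high part
        calc ∑ k ∈ range s, (Tn (s + k) : LaurentSeries (ZMod p)) * G 0 ^ p ^ ((s + k + 1) * l)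
            = ∑ k ∈ range s,
                ((U k : LaurentSeries (ZMod p)) * G 0 ^ p ^ ((k + 1 + s) * l) -
                 (Cc : LaurentSeries (ZMod p)) *
                   (((PP 0 k ^ p ^ (s * l) : RatFunc (ZMod p)) : LaurentSeries (ZMod p)) *
                    G 0 ^ p ^ ((k + 1 + s) * l))) := by
              refine Finset.sum_congr rfl fun k hk => ?_
              rw [hTn]
              simp only [if_neg (by omega : ¬ s + k < s), Nat.add_sub_cancel_left,
                map_sub, map_mul, map_pow,
                show (s + k + 1) * l = (k + 1 + s) * l by ring, sub_mul, mul_assoc]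
          _ = _ := by
              rw [Finset.sum_sub_distrib, ← Finset.mul_sum]
    have rhsD : (∑ j ∈ range (m - 1), (Dn j : LaurentSeries (ZMod p)) *
          G (j + 1) ^ p ^ (2 * s * l)) =
        (∑ j ∈ range (m - 1), (B j : LaurentSeries (ZMod p)) * G (j + 1) ^ p ^ (2 * s * l)) -
        (Cc : LaurentSeries (ZMod p)) *
          ∑ j ∈ range (m - 1), ((AA 0 j ^ p ^ (s * l) : RatFunc (ZMod p)) :
            LaurentSeries (ZMod p)) * G (j + 1) ^ p ^ (2 * s * l) := by
      rw [Finset.mul_sum, ← Finset.sum_sub_distrib]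
      refine Finset.sum_congr rfl fun j _ => ?_
      rw [hDn]
      simp only [map_sub, map_mul, map_pow, sub_mul, mul_assoc]
    have hlast : (B (m - 1) : LaurentSeries (ZMod p)) * G m ^ p ^ (2 * s * l) =
        (Cc : LaurentSeries (ZMod p)) *
        (G 0 ^ p ^ (s * l)
        - (∑ k ∈ range s, ((PP 0 k ^ p ^ (s * l) : RatFunc (ZMod p)) : LaurentSeries (ZMod p)) *
            G 0 ^ p ^ ((k + 1 + s) * l))
        - ∑ j ∈ range (m - 1), ((AA 0 j ^ p ^ (s * l) : RatFunc (ZMod p)) :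
            LaurentSeries (ZMod p)) * G (j + 1) ^ p ^ (2 * s * l)) := by
      rw [hBCc, mul_assoc, stepB]
    rw [rhsT, rhsD, stepA, hlast]
    ring
  -- height bounds
  have hbPP : ∀ j k, HB (PP j k) (C₁ * p ^ (s * l)) := by
    intro j k
    rw [hPP]; dsimp only
    split_ifs with h
    · exact hb_mono (hb_self _) (le_of_lt (hPh _ _))
    · exact hb_zero _
  have hbAA : ∀ j k, HB (AA j k) (C₁ * p ^ (s * l)) := by
    intro j k
    rw [hAA]; dsimp only
    split_ifs with h
    · exact hb_mono (hb_self _) (le_of_lt (hAh _ _))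
    · exact hb_zero _
  set a := C₁ * p ^ (s * l) with ha
  set qq := p ^ (s * l) with hqq
  set M := m * (a + a * qq) + a * qq with hM
  set N := 2 * (m * (a + a * qq) + a * qq) with hN
  have hbU : ∀ k, HB (U k) (m * (a + a * qq)) := by
    intro k
    rw [hU]; dsimp only
    have := hb_sum (t := range m)
      (f := fun r => AA i.1 r * PP (r + 1) k ^ qq) (n := a + a * qq)
      (fun r _ => hb_mul (hbAA i.1 r) (hb_pow (hbPP (r + 1) k) qq))
    simpa using this
  have hbB : ∀ j, HB (B j) (m * (a + a * qq)) := by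
    intro j
    rw [hB]; dsimp only
    have := hb_sum (t := range m)
      (f := fun r => AA i.1 r * AA (r + 1) j ^ qq) (n := a + a * qq)
      (fun r _ => hb_mul (hbAA i.1 r) (hb_pow (hbAA (r + 1) j) qq))
    simpa using this
  have hbCc : HB Cc M := by
    rw [hCc]
    exact hb_mul (hbB _) (hb_pow (hb_inv (hbAA 0 (m - 1))) qq)
  have haM : a ≤ M := by
    have h1 : a ≤ a + a * qq := Nat.le_add_right _ _
    have h2 : a + a * qq ≤ m * (a + a * qq) := Nat.le_mul_of_pos_left _ hm
    exact le_trans (le_trans h1 h2) (Nat.le_add_right _ _)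
  have hbT : ∀ k, HB (Tn k) N := by
    intro k
    rw [hTn]; dsimp only
    split_ifs with h1 h2
    · exact hb_mono (hb_add (hbPP i.1 k) hbCc) (by omega)
    · exact hb_mono (hb_add (hbPP i.1 k) (hb_zero M)) (by omega)
    · exact hb_mono (hb_sub (hbU (k - s)) (hb_mul hbCc (hb_pow (hbPP 0 (k - s)) qq)))
        (le_of_eq (by ring))
  have hbD : ∀ j, HB (Dn j) N := by
    intro j
    rw [hDn]; dsimp only
    exact hb_mono (hb_sub (hbB j) (hb_mul hbCc (hb_pow (hbAA 0 j) qq)))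
      (le_of_eq (by ring))
  have hq2 : p ^ (2 * s * l) = qq * qq := by
    rw [hqq, ← pow_add]; congr 1; ring
  have hqq2 : 2 ≤ qq := by
    calc 2 ≤ p := hp.out.two_le
    _ ≤ p ^ (s * l) := Nat.le_self_pow (by positivity) p
  have hNlt : N < 5 * C₁ * (m + 1) * p ^ (2 * s * l) := by
    rw [hq2, hN, ha]
    have hq : qq ≤ qq * qq := Nat.le_mul_of_pos_left qq (by omega)
    have hc2 : 0 < C₁ * (qq * qq) := by positivity
    calc 2 * (m * (C₁ * qq + C₁ * qq * qq) + C₁ * qq * qq)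
        = 2 * m * (C₁ * qq) + (2 * m * (C₁ * (qq * qq)) + 2 * (C₁ * (qq * qq))) := by ring
      _ ≤ 2 * m * (C₁ * (qq * qq)) + (2 * m * (C₁ * (qq * qq)) + 2 * (C₁ * (qq * qq))) := by
          have : C₁ * qq ≤ C₁ * (qq * qq) := Nat.mul_le_mul_left _ hq
          exact Nat.add_le_add_right (Nat.mul_le_mul_left _ this) _
      _ = (4 * m + 2) * (C₁ * (qq * qq)) := by ring
      _ < (5 * m + 5) * (C₁ * (qq * qq)) := (Nat.mul_lt_mul_right hc2).2 (by omega)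
      _ = 5 * C₁ * (m + 1) * (qq * qq) := by ring
  refine ⟨fun k => Tn k.1, fun k => Dn k.1, ?_, ?_, ?_⟩
  · intro k
    have h := hb_bound (hbT k.1)
    exact max_lt (lt_of_le_of_lt h.1 hNlt) (lt_of_le_of_lt h.2 hNlt)
  · intro k
    have h := hb_bound (hbD k.1)
    exact max_lt (lt_of_le_of_lt h.1 hNlt) (lt_of_le_of_lt h.2 hNlt)
  · have e1 : (HahnSeries.ofPowerSeries ℤ (ZMod p) (g i.castSucc) :
        LaurentSeries (ZMod p)) = G i.1 := by
      have hmk : (⟨i.1, hi1⟩ : Fin (m + 1)) = i.castSucc := Fin.ext rfl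
      simp [hG, hi1, hmk]
    rw [e1, key]
    congr 1
    · rw [← Fin.sum_univ_eq_sum_range
        (fun k => (Tn k : LaurentSeries (ZMod p)) * G 0 ^ p ^ ((k + 1) * l)) (2 * s)]
      exact Finset.sum_congr rfl fun k _ => by rw [hG0]
    · rw [← Fin.sum_univ_eq_sum_range
        (fun j => (Dn j : LaurentSeries (ZMod p)) * G (j + 1) ^ p ^ (2 * s * l)) (m - 1)]
      refine Finset.sum_congr rfl fun k _ => ?_
      have h2 : G (k.1 + 1) = HahnSeries.ofPowerSeries ℤ (ZMod p)
          (g ⟨k.1 + 1, Nat.succ_lt_succ (k.2.trans_le (Nat.sub_le m 1))⟩) := by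
        simp [hG, Nat.succ_lt_succ (k.2.trans_le (Nat.sub_le m 1)),
          Nat.le_of_lt_succ (Nat.succ_lt_succ (k.2.trans_le (Nat.sub_le m 1)))]
      rw [h2]
end
end

section
/- Let p be a prime number and let α = (α_1,…,α_n) and β = (β_1,…,β_{n−1},1) be in (ℤ_(p)∖ℤ_{≤0})^n. If, for a nonnegative integer j, Q_{α,β}(jp) belongs to ℤ_(p), then Q_{𝔇_p(α),𝔇_p(β)}(j) belongs to ℤ_(p) and Q_{α,β}(jp) − Q_{𝔇_p(α),𝔇_p(β)}(j) ∈ pℤ_(p), i.e. Q_{α,β}(jp) ≡ Q_{𝔇_p(α),𝔇_p(β)}(j) (mod p). -/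
open Finset

noncomputable section

namespace QMP
open Finset

lemma poch_eq_prod (x : ℚ) (i : ℕ) : poch x i = ∏ k ∈ Finset.range i, (x + k) := by
  induction i with
  | zero => simp [poch]
  | succ m ih =>
      rw [poch, ascPochhammer_succ_right, Polynomial.eval_mul]
      rw [Finset.prod_range_succ, ← ih]
      simp [poch]

lemma poch_succ (x : ℚ) (i : ℕ) : poch x (i + 1) = poch x i * (x + i) := by
  rw [poch_eq_prod, poch_eq_prod, Finset.prod_range_succ]

lemma poch_ne_zero {x : ℚ} (h : notNonposInt x) (i : ℕ) : poch x i ≠ 0 := by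
  rw [poch_eq_prod]
  refine Finset.prod_ne_zero_iff.mpr fun k _ hk => ?_
  refine h ⟨-(k:ℤ), by simp, ?_⟩
  push_cast
  linarith [hk]

lemma inZp_iff' {p : ℕ} {x : ℚ} :
    inZp p x ↔ ∃ a b : ℤ, ¬ (p:ℤ) ∣ b ∧ x * b = a := by
  constructor
  · intro h
    refine ⟨x.num, x.den, fun hd => h (Int.ofNat_dvd.mp hd), ?_⟩
    rw [mul_comm]
    exact_mod_cast Rat.den_mul_eq_num x
  · rintro ⟨a, b, hb, hab⟩
    intro hd
    have hb0 : b ≠ 0 := by rintro rfl; exact hb (dvd_zero _)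
    have hx : x = (a : ℚ) / b := by field_simp; linear_combination hab
    have h2 : ((Rat.divInt a b).den : ℤ) ∣ b := Rat.den_dvd a b
    rw [Rat.divInt_eq_div, ← hx] at h2
    exact hb (dvd_trans (Int.ofNat_dvd.mpr hd) h2)

variable {p : ℕ} [hpf : Fact p.Prime]

lemma den_cast_ne {x : ℚ} (hx : inZp p x) : ((x.den : ℕ) : ZMod p) ≠ 0 := by
  have hx' : ¬ p ∣ x.den := hx
  simpa [ZMod.natCast_eq_zero_iff] using hx'

lemma castQ_eq {x : ℚ} {a b : ℤ} (hb : ¬(p:ℤ) ∣ b) (h : x * b = a) :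
    (x : ZMod p) = (a : ZMod p) / (b : ZMod p) := by
  have hx : inZp p x := inZp_iff'.mpr ⟨a, b, hb, h⟩
  have hb0 : ((b : ℤ) : ZMod p) ≠ 0 := by
    simpa [ZMod.intCast_zmod_eq_zero_iff_dvd] using hb
  have hd0 : ((x.den : ℤ) : ZMod p) ≠ 0 := by
    push_cast
    exact den_cast_ne hx
  have hcross : x.num * b = a * (x.den : ℤ) := by
    have h1 : (x.num : ℚ) * b = a * (x.den : ℚ) := by
      have h2 : ((x.den : ℚ)) * x = (x.num : ℚ) := by
        exact_mod_cast Rat.den_mul_eq_num x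
      linear_combination (x.den : ℚ) * h - (b : ℚ) * h2
    exact_mod_cast h1
  rw [Rat.cast_def]
  rw [div_eq_div_iff (by push_cast at hd0 ⊢; exact hd0) hb0]
  have := congrArg (fun z : ℤ => (z : ZMod p)) hcross
  push_cast at this ⊢
  linear_combination this

lemma inPZp_iff {x : ℚ} (hx : inZp p x) : inPZp p x ↔ (x : ZMod p) = 0 := by
  have h : (x : ZMod p) = (x.num : ZMod p) / ((x.den : ℤ) : ZMod p) := by
    refine castQ_eq (fun hd => hx (Int.ofNat_dvd.mp hd)) ?_
    rw [mul_comm]; exact_mod_cast Rat.den_mul_eq_num x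
  have hd0 : ((x.den : ℤ) : ZMod p) ≠ 0 := by push_cast; exact den_cast_ne hx
  rw [h, div_eq_zero_iff]
  simp only [hd0, or_false]
  rw [ZMod.intCast_zmod_eq_zero_iff_dvd]
  exact ⟨fun h => h.2, fun h => ⟨hx, h⟩⟩

lemma prime_not_dvd_mul {a b : ℤ} (ha : ¬(p:ℤ) ∣ a) (hb : ¬(p:ℤ) ∣ b) : ¬(p:ℤ) ∣ a*b := by
  intro h
  rcases (Int.Prime.dvd_mul' (by exact_mod_cast hpf.out) h) with h1 | h1
  exacts [ha h1, hb h1]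

lemma add_spec {x y : ℚ} (hx : inZp p x) (hy : inZp p y) :
    inZp p (x + y) ∧ ((x + y : ℚ) : ZMod p) = (x : ZMod p) + (y : ZMod p) := by
  obtain ⟨a, b, hb, hab⟩ := inZp_iff'.mp hx
  obtain ⟨c, d, hd, hcd⟩ := inZp_iff'.mp hy
  have key : (x + y) * ((b * d : ℤ) : ℚ) = ((a * d + c * b : ℤ) : ℚ) := by
    push_cast; linear_combination (d:ℚ) * hab + (b:ℚ) * hcd
  have hbd := prime_not_dvd_mul hb hd
  refine ⟨inZp_iff'.mpr ⟨_, _, hbd, key⟩, ?_⟩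
  rw [castQ_eq hbd key, castQ_eq hb hab, castQ_eq hd hcd]
  have hb0 : ((b:ℤ) : ZMod p) ≠ 0 := by simpa [ZMod.intCast_zmod_eq_zero_iff_dvd] using hb
  have hd0 : ((d:ℤ) : ZMod p) ≠ 0 := by simpa [ZMod.intCast_zmod_eq_zero_iff_dvd] using hd
  push_cast
  field_simp

lemma mul_spec {x y : ℚ} (hx : inZp p x) (hy : inZp p y) :
    inZp p (x * y) ∧ ((x * y : ℚ) : ZMod p) = (x : ZMod p) * (y : ZMod p) := by
  obtain ⟨a, b, hb, hab⟩ := inZp_iff'.mp hx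
  obtain ⟨c, d, hd, hcd⟩ := inZp_iff'.mp hy
  have key : (x * y) * ((b * d : ℤ) : ℚ) = ((a * c : ℤ) : ℚ) := by
    push_cast; linear_combination (y * (d:ℚ)) * hab + (a:ℚ) * hcd
  have hbd := prime_not_dvd_mul hb hd
  refine ⟨inZp_iff'.mpr ⟨_, _, hbd, key⟩, ?_⟩
  rw [castQ_eq hbd key, castQ_eq hb hab, castQ_eq hd hcd]
  have hb0 : ((b:ℤ) : ZMod p) ≠ 0 := by simpa [ZMod.intCast_zmod_eq_zero_iff_dvd] using hb
  have hd0 : ((d:ℤ) : ZMod p) ≠ 0 := by simpa [ZMod.intCast_zmod_eq_zero_iff_dvd] using hd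
  push_cast
  field_simp

lemma natCast_spec (m : ℕ) : inZp p ((m:ℚ)) := by
  unfold inZp
  rw [Rat.den_natCast, Nat.dvd_one]
  exact hpf.out.one_lt.ne'

lemma neg_spec {x : ℚ} (hx : inZp p x) :
    inZp p (-x) ∧ ((-x : ℚ) : ZMod p) = -(x : ZMod p) := by
  refine ⟨?_, by push_cast; ring⟩
  unfold inZp at hx ⊢
  rwa [Rat.neg_den]

lemma sub_spec {x y : ℚ} (hx : inZp p x) (hy : inZp p y) :
    inZp p (x - y) ∧ ((x - y : ℚ) : ZMod p) = (x : ZMod p) - (y : ZMod p) := by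
  have h := add_spec hx (neg_spec hy).1
  rw [← sub_eq_add_neg] at h
  refine ⟨h.1, ?_⟩
  rw [h.2, (neg_spec hy).2]
  ring

lemma div_spec {x u : ℚ} (hx : inZp p x) (hu : inZp p u) (hu0 : (u : ZMod p) ≠ 0) :
    inZp p (x / u) ∧ ((x / u : ℚ) : ZMod p) = (x : ZMod p) / (u : ZMod p) := by
  obtain ⟨a, b, hb, hab⟩ := inZp_iff'.mp hx
  obtain ⟨c, d, hd, hcd⟩ := inZp_iff'.mp hu
  have hune : u ≠ 0 := by rintro rfl; exact hu0 (by push_cast; ring)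
  have hd0 : ((d:ℤ) : ZMod p) ≠ 0 := by simpa [ZMod.intCast_zmod_eq_zero_iff_dvd] using hd
  have hc : ¬ (p:ℤ) ∣ c := by
    intro hdvd
    apply hu0
    rw [castQ_eq hd hcd]
    rw [div_eq_zero_iff]
    left
    exact (ZMod.intCast_zmod_eq_zero_iff_dvd c p).mpr hdvd
  have key : (x / u) * ((b * c : ℤ) : ℚ) = ((a * d : ℤ) : ℚ) := by
    push_cast
    field_simp
    linear_combination (c:ℚ) * hab - (a:ℚ) * hcd
  have hbc := prime_not_dvd_mul hb hc
  refine ⟨inZp_iff'.mpr ⟨_, _, hbc, key⟩, ?_⟩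
  rw [castQ_eq hbc key, castQ_eq hb hab, castQ_eq hd hcd]
  have hb0 : ((b:ℤ) : ZMod p) ≠ 0 := by simpa [ZMod.intCast_zmod_eq_zero_iff_dvd] using hb
  have hc0 : ((c:ℤ) : ZMod p) ≠ 0 := by simpa [ZMod.intCast_zmod_eq_zero_iff_dvd] using hc
  push_cast
  field_simp

lemma prod_spec {ι : Type*} [DecidableEq ι] (s : Finset ι) (f : ι → ℚ)
    (h : ∀ i ∈ s, inZp p (f i)) :
    inZp p (∏ i ∈ s, f i) ∧
      ((∏ i ∈ s, f i : ℚ) : ZMod p) = ∏ i ∈ s, ((f i : ℚ) : ZMod p) := by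
  induction s using Finset.induction with
  | empty =>
      constructor
      · simpa using natCast_spec (p := p) 1
      · simp
  | @insert i s his ih =>
      have h1 := h i (Finset.mem_insert_self i s)
      have h2 := ih fun j hj => h j (Finset.mem_insert_of_mem hj)
      rw [Finset.prod_insert his, Finset.prod_insert his]
      have h3 := mul_spec h1 h2.1
      exact ⟨h3.1, by rw [h3.2, h2.2]⟩

lemma prod_univ_erase_zero : ∏ z ∈ (univ : Finset (ZMod p)).erase 0, z = -1 := by
  have h1 : ∏ u : (ZMod p)ˣ, (u : ZMod p) = ((-1 : (ZMod p)ˣ) : ZMod p) := by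
    rw [show (fun u : (ZMod p)ˣ => (u : ZMod p)) = fun u => Units.coeHom (ZMod p) u from rfl,
      ← map_prod (Units.coeHom (ZMod p)), FiniteField.prod_univ_units_id_eq_neg_one]
    rfl
  have h2 : ∏ u : (ZMod p)ˣ, (u : ZMod p) = ∏ z ∈ (univ : Finset (ZMod p)).erase 0, z := by
    refine Finset.prod_bij (fun u _ => (u : ZMod p)) ?_ ?_ ?_ ?_
    · intro u _
      exact Finset.mem_erase.mpr ⟨u.ne_zero, Finset.mem_univ _⟩
    · intro u _ v _ h
      exact Units.ext h
    · intro z hz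
      have hz0 : z ≠ 0 := (Finset.mem_erase.mp hz).1
      exact ⟨(IsUnit.mk0 z hz0).unit, Finset.mem_univ _, rfl⟩
    · intro u _; rfl
  rw [← h2, h1, Units.val_neg, Units.val_one]

lemma prod_erase_sub (a : ZMod p) :
    ∏ z ∈ (univ : Finset (ZMod p)).erase a, (z - a) = -1 := by
  rw [← prod_univ_erase_zero (p := p)]
  refine Finset.prod_nbij' (fun z => z - a) (fun w => w + a) ?_ ?_ ?_ ?_ ?_
  · intro z hz
    refine Finset.mem_erase.mpr ⟨sub_ne_zero.mpr (Finset.mem_erase.mp hz).1, Finset.mem_univ _⟩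
  · intro w hw
    refine Finset.mem_erase.mpr ⟨?_, Finset.mem_univ _⟩
    have := (Finset.mem_erase.mp hw).1
    intro h
    apply this
    have : w + a - a = a - a := by rw [h]
    simpa using this
  · intro z _; ring
  · intro w _; ring
  · intro z _; rfl


variable {p : ℕ} [hpf : Fact p.Prime]

def aRes (p : ℕ) (x : ℚ) : ℕ := ZMod.val (-(x.num : ZMod p) * ((x.den : ℕ) : ZMod p)⁻¹)

lemma Dp_eq (x : ℚ) : Dp p x = (x + (aRes p x : ℚ)) / p := rfl

lemma aRes_lt (x : ℚ) : aRes p x < p := by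
  haveI : NeZero p := ⟨hpf.out.ne_zero⟩
  exact ZMod.val_lt _

lemma p_ne_zeroQ : (p : ℚ) ≠ 0 := Nat.cast_ne_zero.mpr hpf.out.ne_zero

lemma p_mul_Dp (x : ℚ) : (p:ℚ) * Dp p x = x + (aRes p x : ℚ) := by
  rw [Dp_eq]
  exact mul_div_cancel₀ _ (p_ne_zeroQ)

lemma cast_eq_neg_aRes {x : ℚ} (hx : inZp p x) :
    (x : ZMod p) = -((aRes p x : ℕ) : ZMod p) := by
  have h : (x : ZMod p) = (x.num : ZMod p) / ((x.den : ℤ) : ZMod p) := by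
    refine castQ_eq (fun hd => hx (Int.ofNat_dvd.mp hd)) ?_
    rw [mul_comm]; exact_mod_cast Rat.den_mul_eq_num x
  have h2 : ((aRes p x : ℕ) : ZMod p) = -(x.num : ZMod p) * ((x.den : ℕ) : ZMod p)⁻¹ := by
    simp [aRes, ZMod.natCast_val, ZMod.cast_id]
  rw [h, h2]
  have hd := den_cast_ne hx
  push_cast
  field_simp

lemma inZp_Dp {x : ℚ} (hx : inZp p x) : inZp p (Dp p x) := by
  have hA := add_spec hx (natCast_spec (aRes p x))
  have hcast : ((x + (aRes p x : ℚ) : ℚ) : ZMod p) = 0 := by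
    rw [hA.2, cast_eq_neg_aRes hx]
    push_cast
    ring
  have hP : inPZp p (x + (aRes p x : ℚ)) := (inPZp_iff hA.1).mpr hcast
  obtain ⟨m, hm⟩ := hP.2
  refine inZp_iff'.mpr ⟨m, (x + (aRes p x : ℚ)).den, fun hd => hA.1 (Int.ofNat_dvd.mp hd), ?_⟩
  have hden : (((x + (aRes p x : ℚ)).den : ℚ)) * (x + (aRes p x : ℚ))
      = ((x + (aRes p x : ℚ)).num : ℚ) := by exact_mod_cast Rat.den_mul_eq_num _
  have hnum : (((x + (aRes p x : ℚ)).num : ℚ)) = (p:ℚ) * m := by exact_mod_cast hm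
  rw [Dp_eq]
  have hp0 := p_ne_zeroQ (p := p)
  field_simp
  linear_combination hden + hnum

lemma notNonposInt_Dp {x : ℚ} (hnn : notNonposInt x) : notNonposInt (Dp p x) := by
  rintro ⟨m, hm, hDm⟩
  refine hnn ⟨(p:ℤ) * m - (aRes p x : ℤ), ?_, ?_⟩
  · have h1 : (0:ℤ) ≤ (aRes p x : ℤ) := Int.ofNat_nonneg _
    have h2 : (p:ℤ) * m ≤ 0 := mul_nonpos_of_nonneg_of_nonpos (Int.ofNat_nonneg _) hm
    linarith
  · have h := p_mul_Dp (p := p) x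
    rw [hDm] at h
    push_cast
    linarith

lemma poch_factor {x : ℚ} (j : ℕ) :
    poch x (j * p) = (p:ℚ)^j * poch (Dp p x) j *
      ∏ k ∈ range j, ∏ r ∈ (range p).erase (aRes p x), (x + ((k * p + r : ℕ) : ℚ)) := by
  induction j with
  | zero => simp [poch]
  | succ m ih =>
      have hsplit : poch x ((m+1) * p) = poch x (m*p) * ∏ r ∈ range p, (x + ((m*p + r : ℕ) : ℚ)) := by
        rw [poch_eq_prod, poch_eq_prod, Nat.succ_mul, Finset.prod_range_add]
      have hmem : aRes p x ∈ range p := Finset.mem_range.mpr (aRes_lt x)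
      have hsplit2 : ∏ r ∈ range p, (x + ((m*p + r : ℕ) : ℚ)) =
          (x + ((m*p + aRes p x : ℕ) : ℚ)) *
            ∏ r ∈ (range p).erase (aRes p x), (x + ((m*p + r : ℕ) : ℚ)) :=
        (Finset.mul_prod_erase _ _ hmem).symm
      have hfac : (x + ((m*p + aRes p x : ℕ) : ℚ)) = (p:ℚ) * (Dp p x + m) := by
        have h := p_mul_Dp (p := p) x
        push_cast
        linarith
      rw [hsplit, hsplit2, hfac, ih, Finset.prod_range_succ, poch_succ]
      ring

lemma W_spec {x : ℚ} (hx : inZp p x) (k : ℕ) :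
    inZp p (∏ r ∈ (range p).erase (aRes p x), (x + ((k * p + r : ℕ) : ℚ))) ∧
    ((∏ r ∈ (range p).erase (aRes p x), (x + ((k * p + r : ℕ) : ℚ)) : ℚ) : ZMod p) = -1 := by
  haveI : NeZero p := ⟨hpf.out.ne_zero⟩
  have hfac : ∀ r ∈ (range p).erase (aRes p x), inZp p (x + ((k * p + r : ℕ) : ℚ)) :=
    fun r _ => (add_spec hx (natCast_spec _)).1
  have hps := prod_spec _ _ hfac
  refine ⟨hps.1, ?_⟩
  rw [hps.2]
  have hcastfac : ∀ r ∈ (range p).erase (aRes p x),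
      ((x + ((k * p + r : ℕ) : ℚ) : ℚ) : ZMod p) = ((r:ℕ) : ZMod p) - ((aRes p x : ℕ) : ZMod p) := by
    intro r _
    rw [(add_spec hx (natCast_spec _)).2, cast_eq_neg_aRes hx, Rat.cast_natCast]
    push_cast [ZMod.natCast_self]
    ring
  rw [Finset.prod_congr rfl hcastfac]
  rw [← prod_erase_sub ((aRes p x : ℕ) : ZMod p)]
  refine Finset.prod_nbij' (fun r => ((r:ℕ) : ZMod p)) (fun z => z.val) ?_ ?_ ?_ ?_ ?_
  · intro r hr
    obtain ⟨hne, hmem⟩ := Finset.mem_erase.mp hr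
    refine Finset.mem_erase.mpr ⟨?_, Finset.mem_univ _⟩
    intro h
    apply hne
    have h1 := ZMod.val_cast_of_lt (Finset.mem_range.mp hmem)
    have h2 := ZMod.val_cast_of_lt (aRes_lt (p := p) x)
    rw [← h1, ← h2, h]
  · intro z hz
    obtain ⟨hne, _⟩ := Finset.mem_erase.mp hz
    refine Finset.mem_erase.mpr ⟨?_, Finset.mem_range.mpr (ZMod.val_lt z)⟩
    intro h
    apply hne
    have h2 : ((z.val : ℕ) : ZMod p) = z := by simp [ZMod.natCast_val, ZMod.cast_id]
    rw [← h2, h]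
  · intro r hr
    exact ZMod.val_cast_of_lt (Finset.mem_range.mp (Finset.mem_erase.mp hr).2)
  · intro z _
    simp [ZMod.natCast_val, ZMod.cast_id]
  · intro r _
    rfl


lemma poch_dwork {x : ℚ} (hx : inZp p x) (j : ℕ) :
    ∃ V : ℚ, inZp p V ∧ ((V : ℚ) : ZMod p) = (-1)^j ∧ V ≠ 0 ∧
      poch x (j * p) = (p:ℚ)^j * poch (Dp p x) j * V := by
  have hin := prod_spec (range j) _ (fun k (_ : k ∈ range j) => (W_spec hx k).1)
  have hcast : ((∏ k ∈ range j, ∏ r ∈ (range p).erase (aRes p x),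
      (x + ((k * p + r : ℕ) : ℚ)) : ℚ) : ZMod p) = (-1)^j := by
    rw [hin.2, Finset.prod_congr rfl fun k _ => (W_spec hx k).2]
    simp
  refine ⟨_, hin.1, hcast, ?_, poch_factor j⟩
  intro h0
  rw [h0] at hcast
  simp only [Rat.cast_zero] at hcast
  exact pow_ne_zero j ((neg_ne_zero.mpr one_ne_zero)) hcast.symm

end QMP

open QMP

/-- (Lemma `lemm_lambda_0`.) If `Q_{α,β}(jp) ∈ ℤ_(p)` then
`Q_{𝔇_p(α),𝔇_p(β)}(j) ∈ ℤ_(p)` and `Q_{α,β}(jp) ≡ Q_{𝔇_p(α),𝔇_p(β)}(j) (mod p)`. -/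
theorem Qcoef_mul_p (p : ℕ) (hp : Nat.Prime p) {n : ℕ} (α β : Fin (n + 1) → ℚ)
    (hβlast : β (Fin.last n) = 1)
    (hα : ∀ i, inZp p (α i) ∧ notNonposInt (α i))
    (hβ : ∀ i, inZp p (β i) ∧ notNonposInt (β i))
    (j : ℕ) (h : inZp p (Qcoef α β (j * p))) :
    inZp p (Qcoef (fun i => Dp p (α i)) (fun i => Dp p (β i)) j) ∧
    inPZp p (Qcoef α β (j * p) -
      Qcoef (fun i => Dp p (α i)) (fun i => Dp p (β i)) j) := by
  haveI hpf : Fact p.Prime := ⟨hp⟩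
  choose V hV1 hV2 hV3 hV4 using fun s : Fin (n+1) => poch_dwork (p := p) (hα s).1 j
  choose W hW1 hW2 hW3 hW4 using fun s : Fin (n+1) => poch_dwork (p := p) (hβ s).1 j
  have hD'ne : (∏ s, poch (Dp p (β s)) j) ≠ 0 :=
    Finset.prod_ne_zero_iff.mpr fun s _ => poch_ne_zero (notNonposInt_Dp (hβ s).2) j
  have hWprodne : (∏ s, W s) ≠ 0 := Finset.prod_ne_zero_iff.mpr fun s _ => hW3 s
  have hp0 : ((p:ℚ)^j)^(n+1) ≠ 0 := pow_ne_zero _ (pow_ne_zero _ (p_ne_zeroQ (p := p)))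
  have hNum : (∏ s, poch (α s) (j*p)) =
      ((p:ℚ)^j)^(n+1) * (∏ s, poch (Dp p (α s)) j) * ∏ s, V s := by
    rw [Finset.prod_congr rfl fun s _ => hV4 s, Finset.prod_mul_distrib,
      Finset.prod_mul_distrib, Finset.prod_const]
    simp [Finset.card_univ]
  have hDen : (∏ s, poch (β s) (j*p)) =
      ((p:ℚ)^j)^(n+1) * (∏ s, poch (Dp p (β s)) j) * ∏ s, W s := by
    rw [Finset.prod_congr rfl fun s _ => hW4 s, Finset.prod_mul_distrib,
      Finset.prod_mul_distrib, Finset.prod_const]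
    simp [Finset.card_univ]
  have hQ : Qcoef α β (j*p) = Qcoef (fun i => Dp p (α i)) (fun i => Dp p (β i)) j *
      ((∏ s, V s) / (∏ s, W s)) := by
    unfold Qcoef
    simp only
    rw [hNum, hDen]
    field_simp
  have hVin := prod_spec univ V fun s _ => hV1 s
  have hWin := prod_spec univ W fun s _ => hW1 s
  have hVcast : ((∏ s, V s : ℚ) : ZMod p) = ((-1 : ZMod p)^j)^(n+1) := by
    rw [hVin.2, Finset.prod_congr rfl fun s _ => hV2 s, Finset.prod_const]
    simp [Finset.card_univ]
  have hWcast : ((∏ s, W s : ℚ) : ZMod p) = ((-1 : ZMod p)^j)^(n+1) := by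
    rw [hWin.2, Finset.prod_congr rfl fun s _ => hW2 s, Finset.prod_const]
    simp [Finset.card_univ]
  have hWc0 : ((∏ s, W s : ℚ) : ZMod p) ≠ 0 := by
    rw [hWcast]
    exact pow_ne_zero _ (pow_ne_zero _ (neg_ne_zero.mpr one_ne_zero))
  have hu := div_spec hVin.1 hWin.1 hWc0
  have hucast : (((∏ s, V s) / (∏ s, W s) : ℚ) : ZMod p) = 1 := by
    rw [hu.2, hVcast, hWcast]
    exact div_self (by exact pow_ne_zero _ (pow_ne_zero _ (neg_ne_zero.mpr one_ne_zero)))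
  have huc0 : (((∏ s, V s) / (∏ s, W s) : ℚ) : ZMod p) ≠ 0 := by
    rw [hucast]; exact one_ne_zero
  have hu0 : ((∏ s, V s) / (∏ s, W s) : ℚ) ≠ 0 := by
    intro h0
    rw [h0] at hucast
    simp at hucast
  have hQ' : Qcoef (fun i => Dp p (α i)) (fun i => Dp p (β i)) j =
      Qcoef α β (j*p) / ((∏ s, V s) / (∏ s, W s)) := by
    rw [hQ]
    exact (mul_div_cancel_right₀ _ hu0).symm

  have hdiv := div_spec h hu.1 huc0
  rw [← hQ'] at hdiv
  refine ⟨hdiv.1, ?_⟩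
  have hsub := sub_spec h hdiv.1
  refine (inPZp_iff hsub.1).mpr ?_
  rw [hsub.2, hdiv.2, hucast]
  simp
end
end

section
/- Let p be a prime number, let α = (α_1,…,α_n) and β = (β_1,…,β_{n−1},1) be in (ℤ_(p)∖ℤ_{≤0})^n, and let r ∈ {0,…,p−1}. Suppose that v_p(Q_{α,β}(r)) = 0, that 𝔇_p(α) and 𝔇_p(β) belong to (ℤ_(p)*)^n, and that v_p(Q_{α,β}(j)) ≥ 0 for all integers j ≥ 0. For each integer j ≥ 0, set R_j = [ ∏_{s∈C_{α,r}} (𝔇_p(α_s))_j · ∏_{s∈P_{α,r}} (𝔇_p(α_s)+1)_j ] / [ ∏_{s∈C_{β,r}} (𝔇_p(β_s))_j · ∏_{s∈P_{β,r}} (𝔇_p(β_s)+1)_j ]. Then: (1) for every integer j ≥ 0, v_p(R_j) ≥ 0; and (2) for every integer j ≥ 0, Q_{α,β}(jp+r) − R_j·Q_{α,β}(r) ∈ pℤ_(p), i.e. Q_{α,β}(jp+r) ≡ R_j·Q_{α,β}(r) (mod p). -/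
open Finset

noncomputable section

/-- The quantity `R_j` of Lemma `lemm_congruences`. -/
def Rfactor (p : ℕ) {n : ℕ} (α β : Fin (n + 1) → ℚ) (r j : ℕ) : ℚ :=
  ((∏ s ∈ Cset p α r, poch (Dp p (α s)) j) *
    ∏ s ∈ Pset p α r, poch (Dp p (α s) + 1) j) /
  ((∏ s ∈ Cset p β r, poch (Dp p (β s)) j) *
    ∏ s ∈ Pset p β r, poch (Dp p (β s) + 1) j)

set_option linter.unusedSectionVars false

section Aux
variable {p : ℕ} [hpf : Fact p.Prime]

lemma rep_lemma {x : ℚ} (a b : ℤ) (hb : ¬ ((p:ℤ) ∣ b)) (h : (b:ℚ) * x = a) :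
    inZp p x ∧ (x : ZMod p) = (a : ZMod p) / (b : ZMod p) := by
  have hb0 : b ≠ 0 := by rintro rfl; exact hb (dvd_zero _)
  have hbQ : (b:ℚ) ≠ 0 := Int.cast_ne_zero.mpr hb0
  have hx : x = (a:ℚ)/(b:ℚ) := by field_simp at h ⊢; linarith [h]
  have hdvd : ((x.den : ℤ)) ∣ b := by
    rw [hx, ← Rat.divInt_eq_div]; exact Rat.den_dvd a b
  have hden : ¬ (p ∣ x.den) := by
    intro hpd
    exact hb (dvd_trans (Int.ofNat_dvd.mpr hpd) hdvd)
  refine ⟨hden, ?_⟩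
  have hdQ : ((x.den : ℚ)) ≠ 0 := by positivity
  have cross : (x.num : ℚ) * b = a * (x.den : ℚ) := by
    have h2 : (x.num : ℚ)/(x.den:ℚ) = (a:ℚ)/(b:ℚ) := by rw [Rat.num_div_den, hx]
    exact (div_eq_div_iff hdQ hbQ).mp h2
  have crossZ : x.num * b = a * (x.den : ℤ) := by exact_mod_cast cross
  have crossF : (x.num : ZMod p) * (b : ZMod p) = (a : ZMod p) * ((x.den : ℕ) : ZMod p) := by
    have := congrArg (Int.cast : ℤ → ZMod p) crossZ
    push_cast at this
    exact this
  have hdenF : ((x.den : ℕ) : ZMod p) ≠ 0 := by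
    rw [Ne, ZMod.natCast_eq_zero_iff]; exact hden
  have hbF : (b : ZMod p) ≠ 0 := by
    rw [Ne, ZMod.intCast_zmod_eq_zero_iff_dvd]; exact hb
  rw [Rat.cast_def, div_eq_div_iff hdenF hbF]
  exact crossF
lemma den_mul_self (x : ℚ) : (x.den : ℚ) * x = x.num := by
  have hd : (x.den : ℚ) ≠ 0 := by positivity
  nth_rewrite 2 [← Rat.num_div_den x]
  field_simp

lemma not_dvd_mul {a b : ℤ} (ha : ¬ ((p:ℤ) ∣ a)) (hb : ¬ ((p:ℤ) ∣ b)) : ¬ ((p:ℤ) ∣ a * b) := by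
  intro h
  rcases ((Nat.prime_iff_prime_int.mp hpf.out).dvd_mul.mp h) with h' | h'
  exacts [ha h', hb h']

lemma not_dvd_den {x : ℚ} (hx : inZp p x) : ¬ ((p:ℤ) ∣ (x.den : ℤ)) := fun h => hx (Int.ofNat_dvd.mp h)

lemma mul_pair {x y : ℚ} (hx : inZp p x) (hy : inZp p y) :
    inZp p (x * y) ∧ ((x * y : ℚ) : ZMod p) = (x : ZMod p) * (y : ZMod p) := by
  have h := rep_lemma (p := p) (x := x * y) (x.num * y.num) ((x.den : ℤ) * (y.den : ℤ))
    (not_dvd_mul (not_dvd_den hx) (not_dvd_den hy))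
    (by push_cast
        calc (x.den : ℚ) * y.den * (x * y) = ((x.den:ℚ) * x) * ((y.den:ℚ) * y) := by ring
        _ = (x.num : ℚ) * y.num := by rw [den_mul_self, den_mul_self])
  refine ⟨h.1, ?_⟩
  rw [h.2, Rat.cast_def, Rat.cast_def]
  push_cast
  rw [div_mul_div_comm]

lemma add_pair {x y : ℚ} (hx : inZp p x) (hy : inZp p y) :
    inZp p (x + y) ∧ ((x + y : ℚ) : ZMod p) = (x : ZMod p) + (y : ZMod p) := by
  have h := rep_lemma (p := p) (x := x + y) (x.num * y.den + y.num * x.den) ((x.den : ℤ) * (y.den : ℤ))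
    (not_dvd_mul (not_dvd_den hx) (not_dvd_den hy))
    (by push_cast
        calc (x.den : ℚ) * y.den * (x + y)
            = ((x.den:ℚ) * x) * y.den + ((y.den:ℚ) * y) * x.den := by ring
        _ = (x.num : ℚ) * y.den + (y.num : ℚ) * x.den := by rw [den_mul_self, den_mul_self])
  refine ⟨h.1, ?_⟩
  rw [h.2, Rat.cast_def, Rat.cast_def]
  have hdx : ((x.den : ℕ) : ZMod p) ≠ 0 := by
    rw [Ne, ZMod.natCast_eq_zero_iff]; exact hx
  have hdy : ((y.den : ℕ) : ZMod p) ≠ 0 := by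
    rw [Ne, ZMod.natCast_eq_zero_iff]; exact hy
  push_cast
  field_simp

lemma inZp_neg {x : ℚ} (hx : inZp p x) : inZp p (-x) := by
  unfold inZp at *; rwa [Rat.neg_den]

lemma sub_pair {x y : ℚ} (hx : inZp p x) (hy : inZp p y) :
    inZp p (x - y) ∧ ((x - y : ℚ) : ZMod p) = (x : ZMod p) - (y : ZMod p) := by
  have h := add_pair hx (inZp_neg hy)
  rw [← sub_eq_add_neg] at h
  refine ⟨h.1, ?_⟩
  rw [h.2, Rat.cast_neg, sub_eq_add_neg]

lemma inPZp_iff {x : ℚ} : inPZp p x ↔ inZp p x ∧ (x : ZMod p) = 0 := by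
  constructor
  · rintro ⟨h1, h2⟩
    refine ⟨h1, ?_⟩
    rw [Rat.cast_def, div_eq_zero_iff]
    exact Or.inl ((ZMod.intCast_zmod_eq_zero_iff_dvd _ _).mpr h2)
  · rintro ⟨h1, h2⟩
    refine ⟨h1, ?_⟩
    rw [Rat.cast_def, div_eq_zero_iff] at h2
    rcases h2 with h2 | h2
    · exact (ZMod.intCast_zmod_eq_zero_iff_dvd _ _).mp h2
    · exact absurd ((ZMod.natCast_eq_zero_iff _ _).mp h2) h1

lemma unitZp_iff {x : ℚ} : unitZp p x ↔ inZp p x ∧ (x : ZMod p) ≠ 0 := by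
  have := @inPZp_iff p _ x
  unfold unitZp inPZp at *
  constructor
  · rintro ⟨h1, h2⟩
    exact ⟨h1, fun hc => h2 ((this.mpr ⟨h1, hc⟩).2)⟩
  · rintro ⟨h1, h2⟩
    exact ⟨h1, fun hc => h2 ((this.mp ⟨h1, hc⟩).2)⟩

lemma inZp_natCast (m : ℕ) : inZp p ((m : ℚ)) := by
  unfold inZp
  rw [Rat.den_natCast]
  simp [Nat.dvd_one, hpf.out.ne_one]

lemma inZp_one : inZp p (1 : ℚ) := by exact_mod_cast inZp_natCast (p := p) 1

lemma inv_pair {x : ℚ} (hx : unitZp p x) : inZp p x⁻¹ ∧ ((x⁻¹ : ℚ) : ZMod p) = ((x : ZMod p))⁻¹ := by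
  have hnum : x.num ≠ 0 := fun h => hx.2 (h ▸ dvd_zero _)
  have hx0 : x ≠ 0 := Rat.num_ne_zero.mp hnum
  have h := rep_lemma (p := p) (x := x⁻¹) (x.den : ℤ) x.num hx.2
    (by field_simp; push_cast; linear_combination -(den_mul_self x))
  refine ⟨h.1, ?_⟩
  rw [h.2, Rat.cast_def, ← inv_div]
  push_cast
  rfl

lemma prod_pair {ι : Type*} (s : Finset ι) (f : ι → ℚ) (h : ∀ i ∈ s, inZp p (f i)) :
    inZp p (∏ i ∈ s, f i) ∧ ((∏ i ∈ s, f i : ℚ) : ZMod p) = ∏ i ∈ s, ((f i) : ZMod p) := by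
  classical
  induction s using Finset.cons_induction with
  | empty => simpa using inZp_one (p := p)
  | cons a s ha ih =>
    rw [Finset.prod_cons, Finset.prod_cons]
    have ihs := ih (fun i hi => h i (Finset.mem_cons_of_mem hi))
    have hm := mul_pair (h a (Finset.mem_cons_self _ _)) ihs.1
    exact ⟨hm.1, by rw [hm.2, ihs.2]⟩

lemma poch_eval (x : ℚ) : ∀ m : ℕ, poch x m = ∏ i ∈ Finset.range m, (x + i)
  | 0 => by simp [poch]
  | (m+1) => by
      rw [poch, ascPochhammer_succ_eval, ← poch, poch_eval x m, Finset.prod_range_succ]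

lemma poch_pair {x : ℚ} (hx : inZp p x) (m : ℕ) :
    inZp p (poch x m) ∧ ((poch x m : ℚ) : ZMod p) = ∏ i ∈ Finset.range m, ((x : ZMod p) + i) := by
  rw [poch_eval]
  have h := prod_pair (Finset.range m) (fun i => x + (i:ℚ))
    (fun i _ => (add_pair hx (inZp_natCast i)).1)
  refine ⟨h.1, ?_⟩
  rw [h.2]
  exact Finset.prod_congr rfl fun i _ => by
    rw [(add_pair hx (inZp_natCast i)).2, Rat.cast_natCast]

lemma poch_ne_zero {x : ℚ} (hx : notNonposInt x) (m : ℕ) : poch x m ≠ 0 := by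
  rw [poch_eval]
  intro h
  obtain ⟨i, _, h0⟩ := Finset.prod_eq_zero_iff.mp h
  exact hx ⟨-(i:ℤ), by simp, by push_cast; linarith⟩

def cval (p : ℕ) (x : ℚ) : ℕ := ZMod.val (-(x.num : ZMod p) * ((x.den : ℕ) : ZMod p)⁻¹)

lemma Dp_eq (x : ℚ) : (p:ℚ) * Dp p x = x + (cval p x : ℚ) := by
  have hp0 : (p:ℚ) ≠ 0 := Nat.cast_ne_zero.mpr hpf.out.ne_zero
  rw [Dp, cval]
  field_simp

lemma cval_lt (x : ℚ) : cval p x < p := by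
  haveI : NeZero p := ⟨hpf.out.ne_zero⟩
  exact ZMod.val_lt _

lemma cval_cast {x : ℚ} (hx : inZp p x) : ((cval p x : ℕ) : ZMod p) = -(x : ZMod p) := by
  haveI : NeZero p := ⟨hpf.out.ne_zero⟩
  rw [cval, ZMod.natCast_zmod_val, Rat.cast_def, div_eq_mul_inv, neg_mul]

lemma notNonposInt_Dp {x : ℚ} (hx : notNonposInt x) : notNonposInt (Dp p x) := by
  rintro ⟨m, hm, hDm⟩
  have hp0 : (p:ℚ) ≠ 0 := Nat.cast_ne_zero.mpr hpf.out.ne_zero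
  have hDe := Dp_eq (p := p) x
  rw [hDm] at hDe
  refine hx ⟨(p:ℤ) * m - (cval p x : ℤ), ?_, ?_⟩
  · have h1 : (p:ℤ) * m ≤ 0 := mul_nonpos_of_nonneg_of_nonpos (by positivity) hm
    omega
  · push_cast
    linarith

lemma notNonposInt_add_one {x : ℚ} (hx : notNonposInt x) : notNonposInt (x + 1) := by
  rintro ⟨m, hm, h⟩
  exact hx ⟨m - 1, by omega, by push_cast; linarith⟩

lemma prod_shift_erase (k₀ : ℕ) (hk₀ : k₀ < p) (d : ZMod p) (hd : (k₀ : ZMod p) + d = 0) :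
    ∏ k ∈ (Finset.range p).erase k₀, ((k : ZMod p) + d) = -1 := by
  haveI : NeZero p := ⟨hpf.out.ne_zero⟩
  rw [← ZMod.prod_Ico_one_prime (p := p)]
  refine Finset.prod_bij' (fun k _ => ZMod.val ((k : ZMod p) + d))
      (fun m _ => ZMod.val ((m : ZMod p) - d)) ?_ ?_ ?_ ?_ ?_
  · intro k hk
    obtain ⟨hkne, hkr⟩ := Finset.mem_erase.mp hk
    have hklt := Finset.mem_range.mp hkr
    rw [Finset.mem_Ico]
    refine ⟨?_, ZMod.val_lt _⟩
    rcases Nat.eq_zero_or_pos (ZMod.val ((k : ZMod p) + d)) with h0 | h1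
    · exfalso
      have : ((k : ZMod p) + d) = 0 := by
        rwa [← ZMod.val_eq_zero]
      have hkk : (k : ZMod p) = (k₀ : ZMod p) := by
        have h2 : (k : ZMod p) = -d := by linear_combination this
        have h3 : (k₀ : ZMod p) = -d := by linear_combination hd
        rw [h2, h3]
      have := ZMod.val_cast_of_lt hklt ▸ ZMod.val_cast_of_lt hk₀ ▸ congrArg ZMod.val hkk
      exact hkne this
    · exact h1
  · intro m hm
    obtain ⟨hm1, hm2⟩ := Finset.mem_Ico.mp hm
    rw [Finset.mem_erase]
    constructor
    · intro hc
      have h2 : ((m : ZMod p) - d) = (k₀ : ZMod p) := by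
        rw [← hc, ZMod.natCast_zmod_val]
      have h3 : (m : ZMod p) = 0 := by linear_combination h2 + hd
      rw [ZMod.natCast_eq_zero_iff] at h3
      have := Nat.le_of_dvd (by omega) h3
      omega
    · exact Finset.mem_range.mpr (ZMod.val_lt _)
  · intro k hk
    obtain ⟨_, hkr⟩ := Finset.mem_erase.mp hk
    have hklt := Finset.mem_range.mp hkr
    rw [ZMod.natCast_zmod_val, add_sub_cancel_right, ZMod.val_cast_of_lt hklt]
  · intro m hm
    rw [ZMod.natCast_zmod_val, sub_add_cancel, ZMod.val_cast_of_lt (Finset.mem_Ico.mp hm).2]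
  · intro k hk
    rw [ZMod.natCast_zmod_val]

lemma unitZp_mul {x y : ℚ} (hx : unitZp p x) (hy : unitZp p y) : unitZp p (x * y) := by
  rw [unitZp_iff] at *
  have h := mul_pair hx.1 hy.1
  exact ⟨h.1, by rw [h.2]; exact mul_ne_zero hx.2 hy.2⟩

lemma key_component (γ : ℚ) (hγZ : inZp p γ) (r : ℕ) (hr : r < p) :
    ∀ j : ℕ, ∃ U : ℚ, unitZp p U ∧ ((U : ℚ) : ZMod p) = (-1)^j ∧
      poch γ (j * p + r) = poch γ r * (p:ℚ)^j *
        poch (Dp p γ + ((if cval p γ < r then 1 else 0 : ℕ) : ℚ)) j * U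
  | 0 => by
    refine ⟨1, unitZp_iff.mpr ⟨inZp_one, by simp⟩, by simp, ?_⟩
    have h0 : poch (Dp p γ + ((if cval p γ < r then 1 else 0 : ℕ) : ℚ)) 0 = 1 := by
      simp [poch]
    rw [h0]
    simp
  | (j+1) => by
    obtain ⟨U, hU, hUred, hUid⟩ := key_component γ hγZ r hr j
    have hp1 : 1 < p := hpf.out.one_lt
    set c := cval p γ with hc
    set D := Dp p γ with hDdef
    set ε : ℕ := if c < r then 1 else 0 with hε
    set m := j * p + r with hm
    set k₀ := if c < r then c + p - r else c - r with hk₀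
    have hclt : c < p := cval_lt (p := p) γ
    have hk₀lt : k₀ < p := by rw [hk₀]; split <;> omega
    have hrk₀ : r + k₀ = c + ε * p := by rw [hk₀, hε]; split <;> omega
    have hγD : γ = (p:ℚ) * D - c := by
      have := Dp_eq (p := p) γ
      rw [← hDdef, ← hc] at this
      linarith
    have hγred : (γ : ZMod p) = -((c : ℕ) : ZMod p) := by
      have h := cval_cast (p := p) hγZ
      rw [← hc] at h
      linear_combination h
    set d : ZMod p := ((r : ℕ) : ZMod p) - ((c : ℕ) : ZMod p) with hd_def
    have hd : ((k₀ : ℕ) : ZMod p) + d = 0 := by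
      have h := congrArg (Nat.cast : ℕ → ZMod p) hrk₀
      push_cast at h
      rw [ZMod.natCast_self] at h
      rw [hd_def]
      linear_combination h
    set f : ℕ → ℚ := fun k => γ + ((m + k : ℕ) : ℚ) with hf
    have hfac : ∀ k : ℕ, inZp p (f k) ∧ ((f k : ℚ) : ZMod p) = (k : ZMod p) + d := by
      intro k
      have h := add_pair hγZ (inZp_natCast (p := p) (m + k))
      refine ⟨h.1, ?_⟩
      rw [hf]
      dsimp only
      rw [h.2, Rat.cast_natCast, hγred, hd_def, hm]
      push_cast
      rw [ZMod.natCast_self]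
      ring
    set B : ℚ := ∏ k ∈ (Finset.range p).erase k₀, f k with hB
    have hBpair := prod_pair ((Finset.range p).erase k₀) f (fun k _ => (hfac k).1)
    have hBred : ((B : ℚ) : ZMod p) = -1 := by
      rw [hB, hBpair.2, ← prod_shift_erase k₀ hk₀lt d hd]
      exact Finset.prod_congr rfl fun k _ => (hfac k).2
    have hBunit : unitZp p B := unitZp_iff.mpr ⟨hBpair.1, by rw [hBred]; exact neg_ne_zero.mpr one_ne_zero⟩
    have hterm : f k₀ = (p:ℚ) * (D + j + ε) := by
      rw [hf]
      dsimp only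
      have hrk₀Q : (r:ℚ) + k₀ = c + ε * p := by exact_mod_cast congrArg (Nat.cast : ℕ → ℚ) hrk₀
      rw [hγD, hm]
      push_cast
      linear_combination hrk₀Q
    have hblock : poch γ ((j+1) * p + r) = poch γ m * (f k₀ * B) := by
      have hmp : (j+1) * p + r = m + p := by rw [hm]; ring
      rw [hmp, poch_eval, Finset.prod_range_add, ← poch_eval]
      congr 1
      rw [hB, ← Finset.mul_prod_erase (Finset.range p) f (Finset.mem_range.mpr hk₀lt)]
    refine ⟨U * B, unitZp_mul hU hBunit, ?_, ?_⟩
    · rw [(mul_pair hU.1 hBunit.1).2, hUred, hBred]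
      ring
    · have hsucc : poch (D + (ε : ℚ)) (j+1) = poch (D + (ε : ℚ)) j * (D + ε + j) := by
        rw [poch, poch, ascPochhammer_succ_eval]
      rw [hblock, hUid, hterm, hsucc]
      ring

lemma unitZp_inv {x : ℚ} (hx : unitZp p x) : unitZp p x⁻¹ := by
  have h := inv_pair hx
  exact unitZp_iff.mpr ⟨h.1, by rw [h.2]; exact inv_ne_zero (unitZp_iff.mp hx).2⟩

lemma unitZp_ne_zero {x : ℚ} (hx : unitZp p x) : x ≠ 0 := by
  intro h
  exact (unitZp_iff.mp hx).2 (by rw [h]; exact Rat.cast_zero)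

lemma inPZp_poch_iff {x : ℚ} (hx : inZp p x) {r : ℕ} (hr : r < p) :
    inPZp p (poch x r) ↔ cval p x < r := by
  haveI : NeZero p := ⟨hpf.out.ne_zero⟩
  rw [inPZp_iff]
  have hp := poch_pair hx r
  have hxred : (x : ZMod p) = -((cval p x : ℕ) : ZMod p) := by
    have h := cval_cast (p := p) hx
    linear_combination h
  constructor
  · rintro ⟨-, h0⟩
    rw [hp.2, Finset.prod_eq_zero_iff] at h0
    obtain ⟨i, hi, h0⟩ := h0
    rw [hxred] at h0
    have heq : ((i : ℕ) : ZMod p) = ((cval p x : ℕ) : ZMod p) := by linear_combination h0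
    have hi' := Finset.mem_range.mp hi
    have : i = cval p x := by
      have h2 := congrArg ZMod.val heq
      rwa [ZMod.val_cast_of_lt (lt_trans hi' hr), ZMod.val_cast_of_lt (cval_lt x)] at h2
    omega
  · intro hlt
    refine ⟨hp.1, ?_⟩
    rw [hp.2]
    apply Finset.prod_eq_zero (Finset.mem_range.mpr hlt)
    rw [hxred]
    ring

end Aux

section Main
variable {p : ℕ} [hpf : Fact p.Prime]

lemma eps_prod_split {n : ℕ} (γ : Fin (n+1) → ℚ) (hγ : ∀ i, inZp p (γ i))
    {r : ℕ} (hr : r < p) (j : ℕ) :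
    ∏ s, poch (Dp p (γ s) + ((if cval p (γ s) < r then 1 else 0 : ℕ) : ℚ)) j
      = (∏ s ∈ Cset p γ r, poch (Dp p (γ s)) j) *
        ∏ s ∈ Pset p γ r, poch (Dp p (γ s) + 1) j := by
  classical
  rw [← Finset.prod_filter_mul_prod_filter_not Finset.univ
    (fun s => inPZp p (poch (γ s) r))
    (fun s => poch (Dp p (γ s) + ((if cval p (γ s) < r then 1 else 0 : ℕ) : ℚ)) j),
    mul_comm]
  congr 1
  · rw [Cset, Finset.filter_congr_decidable]
    refine Finset.prod_congr rfl fun s hs => ?_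
    have h := (Finset.mem_filter.mp hs).2
    rw [if_neg (fun hc => h ((inPZp_poch_iff (hγ s) hr).mpr hc))]
    norm_num
  · rw [Pset, Finset.filter_congr_decidable]
    refine Finset.prod_congr rfl fun s hs => ?_
    have h := (Finset.mem_filter.mp hs).2
    rw [if_pos ((inPZp_poch_iff (hγ s) hr).mp h)]
    norm_num

lemma family_decomp {n : ℕ} (γ : Fin (n+1) → ℚ) (hγ : ∀ i, inZp p (γ i))
    {r : ℕ} (hr : r < p) (j : ℕ) :
    ∃ V : ℚ, unitZp p V ∧ ((V : ℚ) : ZMod p) = ((-1 : ZMod p)^j)^(n+1) ∧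
    ∏ s, poch (γ s) (j * p + r) = (∏ s, poch (γ s) r) * ((p:ℚ)^j)^(n+1) *
      ((∏ s ∈ Cset p γ r, poch (Dp p (γ s)) j) *
        ∏ s ∈ Pset p γ r, poch (Dp p (γ s) + 1) j) * V := by
  choose U hU1 hU2 hU3 using fun s => key_component (γ s) (hγ s) r hr j
  have hprodU := prod_pair Finset.univ U (fun s _ => (hU1 s).1)
  refine ⟨∏ s, U s, ?_, ?_, ?_⟩
  · refine unitZp_iff.mpr ⟨hprodU.1, ?_⟩
    rw [hprodU.2]
    exact Finset.prod_ne_zero_iff.mpr fun s _ => by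
      rw [hU2 s]; exact pow_ne_zero _ (neg_ne_zero.mpr one_ne_zero)
  · rw [hprodU.2, Finset.prod_congr rfl (fun s _ => hU2 s), Finset.prod_const,
      Finset.card_univ, Fintype.card_fin]
  · rw [← eps_prod_split γ hγ hr j]
    calc ∏ s, poch (γ s) (j * p + r)
        = ∏ s, (poch (γ s) r * (p:ℚ)^j *
            poch (Dp p (γ s) + ((if cval p (γ s) < r then 1 else 0 : ℕ) : ℚ)) j * U s) :=
          Finset.prod_congr rfl (fun s _ => hU3 s)
      _ = _ := by
          rw [Finset.prod_mul_distrib, Finset.prod_mul_distrib, Finset.prod_mul_distrib,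
            Finset.prod_const, Finset.card_univ, Fintype.card_fin]
end Main

/-- (Lemma `lemm_congruences`.) `v_p(R_j) ≥ 0` and
`Q_{α,β}(jp + r) ≡ R_j · Q_{α,β}(r) (mod p)`. -/
theorem congruences (p : ℕ) (hp : Nat.Prime p)
    {n : ℕ} (α β : Fin (n + 1) → ℚ)
    (hβlast : β (Fin.last n) = 1)
    (hα : ∀ i, inZp p (α i) ∧ notNonposInt (α i))
    (hβ : ∀ i, inZp p (β i) ∧ notNonposInt (β i))
    (r : ℕ) (hr : r < p)
    (hQr : unitZp p (Qcoef α β r))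
    (hDα : ∀ i, unitZp p (Dp p (α i))) (hDβ : ∀ i, unitZp p (Dp p (β i)))
    (hfZ : ∀ j : ℕ, inZp p (Qcoef α β j)) :
    (∀ j : ℕ, inZp p (Rfactor p α β r j)) ∧
    ∀ j : ℕ, inPZp p (Qcoef α β (j * p + r) - Rfactor p α β r j * Qcoef α β r) := by

  haveI hpf : Fact p.Prime := ⟨hp⟩
  have main : ∀ j : ℕ, inZp p (Rfactor p α β r j) ∧
      inPZp p (Qcoef α β (j * p + r) - Rfactor p α β r j * Qcoef α β r) := by
    intro j
    obtain ⟨VA, hVAu, hVAred, hVAid⟩ := family_decomp α (fun i => (hα i).1) hr j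
    obtain ⟨VB, hVBu, hVBred, hVBid⟩ := family_decomp β (fun i => (hβ i).1) hr j
    set NR := (∏ s ∈ Cset p α r, poch (Dp p (α s)) j) *
      ∏ s ∈ Pset p α r, poch (Dp p (α s) + 1) j with hNR
    set DR := (∏ s ∈ Cset p β r, poch (Dp p (β s)) j) *
      ∏ s ∈ Pset p β r, poch (Dp p (β s) + 1) j with hDR
    have hRdef : Rfactor p α β r j = NR / DR := by rw [hNR, hDR]; rfl
    have hBnum : (∏ s, poch (β s) r) ≠ 0 :=
      Finset.prod_ne_zero_iff.mpr fun s _ => poch_ne_zero (hβ s).2 r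
    have hDRne : DR ≠ 0 := by
      rw [hDR]
      apply mul_ne_zero
      · exact Finset.prod_ne_zero_iff.mpr fun s _ =>
          poch_ne_zero (notNonposInt_Dp (hβ s).2) j
      · exact Finset.prod_ne_zero_iff.mpr fun s _ =>
          poch_ne_zero (notNonposInt_add_one (notNonposInt_Dp (hβ s).2)) j
    have hVBne : VB ≠ 0 := unitZp_ne_zero hVBu
    have hpne : ((p:ℚ)^j)^(n+1) ≠ 0 := by
      have : (p:ℚ) ≠ 0 := Nat.cast_ne_zero.mpr hp.ne_zero
      positivity
    set W := VA * VB⁻¹ with hW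
    have hWu : unitZp p W := unitZp_mul hVAu (unitZp_inv hVBu)
    have hid : Qcoef α β (j * p + r) = Rfactor p α β r j * Qcoef α β r * W := by
      simp only [Qcoef]
      rw [hVAid, hVBid, hRdef, hW]
      field_simp
    have hiv := inv_pair hVBu
    have hmp := mul_pair hVAu.1 hiv.1
    have hWred : ((W : ℚ) : ZMod p) = 1 := by
      rw [hW, hmp.2, hiv.2, hVAred, hVBred]
      exact mul_inv_cancel₀ (pow_ne_zero _ (pow_ne_zero _ (neg_ne_zero.mpr one_ne_zero)))
    have hQrne : Qcoef α β r ≠ 0 := unitZp_ne_zero hQr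
    have hWne : W ≠ 0 := unitZp_ne_zero hWu
    have hR_eq : Rfactor p α β r j = Qcoef α β (j * p + r) * (Qcoef α β r)⁻¹ * W⁻¹ := by
      rw [hid]
      field_simp
    have hRZ : inZp p (Rfactor p α β r j) := by
      rw [hR_eq]
      exact (mul_pair (mul_pair (hfZ (j * p + r)) (inv_pair hQr).1).1 (inv_pair hWu).1).1
    refine ⟨hRZ, ?_⟩
    have hdiff : Qcoef α β (j * p + r) - Rfactor p α β r j * Qcoef α β r
        = Rfactor p α β r j * Qcoef α β r * (W - 1) := by
      rw [hid]; ring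
    rw [hdiff]
    have h1 := mul_pair hRZ hQr.1
    have h2 := sub_pair hWu.1 (inZp_one (p := p))
    have h3 := mul_pair h1.1 h2.1
    refine inPZp_iff.mpr ⟨h3.1, ?_⟩
    rw [h3.2, h2.2, hWred]
    simp
  exact ⟨fun j => (main j).1, fun j => (main j).2⟩
end
end
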